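/- arXiv:2005.01080 — 7 statements merged into one kernel-verified Lean document; each statement's English description precedes it below -/
import Mathlib

section
/- Let n, k, r, s be positive integers with (r−1)k + r ≤ s ≤ rk + r − 1 and n ≥ rk + r − 1, and let H be an r-graph on n vertices with matching number ν(H) ≤ k. Then K_s^r(H) ≤ K_s^r(F^{(r)}_{n,k,r}) = C(rk+r−1, s). -/
/-!
Shifting `S_{ij}` with `i < j` does not increase the matching number, and it does not decrease the
number of `s`-cliques because the shift of the clique family lies in the clique family of the
shifted hypergraph. Unless it fixes `H`, a shift strictly lowers the total vertex weight, so after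
transporting `H` to `Fin n` we may assume that `H` is stable. In a stable `H` every `s`-clique lies
inside the first `rk + r - 1` vertices, and the `s`-cliques of `F^{(r)}_{n,k,r}` are exactly the
`s`-subsets of these vertices.
-/

open Finset

/-- The number of `s`-cliques of the `r`-uniform hypergraph `H`
(sets of `s` vertices all of whose `r`-element subsets are edges). -/
def cliqueCount {V : Type*} [Fintype V] [DecidableEq V] (r s : ℕ)
    (H : Finset (Finset V)) : ℕ :=
  ((Finset.univ.powersetCard s).filter (fun S => S.powersetCard r ⊆ H)).card

/-- The hypergraph `F^{(r)}_{n,k,a}` on `Fin n`: all `r`-element subsets having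
at least `a` elements among the first `a*k + a - 1` vertices. -/
def Fnka (n k r a : ℕ) : Finset (Finset (Fin n)) :=
  (Finset.univ.powersetCard r).filter
    (fun E => a ≤ (E.filter (fun x : Fin n => (x : ℕ) < a * k + a - 1)).card)

/-- The matching number of `H` is at most `k`. -/
def matchingLE {V : Type*} (H : Finset (Finset V)) (k : ℕ) : Prop :=
  ∀ M ⊆ H, (M : Set (Finset V)).Pairwise Disjoint → M.card ≤ k

/-- The degree of a vertex set `A`: the number of edges of `H` containing `A`. -/
def degOf {V : Type*} [DecidableEq V] (H : Finset (Finset V)) (A : Finset V) : ℕ :=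
  (H.filter (fun E => A ⊆ E)).card

/-- The shifting operator `S_{ij}` applied to a single edge. -/
def shiftEdge {n : ℕ} (H : Finset (Finset (Fin n))) (i j : Fin n)
    (E : Finset (Fin n)) : Finset (Fin n) :=
  if j ∈ E ∧ i ∉ E ∧ insert i (E.erase j) ∉ H then insert i (E.erase j) else E

/-- The shifted hypergraph `S_{ij}(H)`. -/
def shift {n : ℕ} (H : Finset (Finset (Fin n))) (i j : Fin n) :
    Finset (Finset (Fin n)) :=
  H.image (shiftEdge H i j)

/-- `H` is stable if it is invariant under all shifts `S_{ij}` with `i < j`. -/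
def IsStable {n : ℕ} (H : Finset (Finset (Fin n))) : Prop :=
  ∀ i j : Fin n, i < j → shift H i j = H

open Equiv

section Cliques
variable {V W : Type*} [Fintype V] [DecidableEq V] {r s : ℕ}

def cliqueFinset (r s : ℕ) (H : Finset (Finset V)) : Finset (Finset V) :=
  (univ.powersetCard s).filter (fun S => S.powersetCard r ⊆ H)

theorem mem_cliqueFinset {H : Finset (Finset V)} {S : Finset V} :
    S ∈ cliqueFinset r s H ↔ S.card = s ∧ S.powersetCard r ⊆ H := by
  simp [cliqueFinset]

theorem card_cliqueFinset (H : Finset (Finset V)) :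
    (cliqueFinset r s H).card = cliqueCount r s H := rfl

theorem mem_of_mem_cliqueFinset {H : Finset (Finset V)} {S E : Finset V}
    (hS : S ∈ cliqueFinset r s H) (hES : E ⊆ S) (hE : E.card = r) : E ∈ H :=
  (mem_cliqueFinset.1 hS).2 (mem_powersetCard.2 ⟨hES, hE⟩)

theorem cliqueFinset_powersetCard (hr : 0 < r) (hrs : r ≤ s) (X : Finset V) :
    cliqueFinset r s (X.powersetCard r) = X.powersetCard s := by
  ext S
  rw [mem_cliqueFinset, mem_powersetCard, and_comm (a := S ⊆ X)]
  refine and_congr_right fun hS => ⟨fun h v hv => ?_, fun hSX => powersetCard_mono hSX⟩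
  obtain ⟨E, hvE, hES, hE⟩ := exists_subsuperset_card_eq (singleton_subset_iff.2 hv)
    (by rw [card_singleton]; exact hr) (hS ▸ hrs)
  exact (mem_powersetCard.1 (h (mem_powersetCard.2 ⟨hES, hE⟩))).1 (singleton_subset_iff.1 hvE)

theorem cliqueCount_le_map [Fintype W] [DecidableEq W] (f : V ↪ W) (H : Finset (Finset V)) :
    cliqueCount r s H ≤ cliqueCount r s (H.map (mapEmbedding f).toEmbedding) := by
  refine card_le_card_of_injOn (fun S => S.map f) (fun S hS => ?_) (map_injective f).injOn
  obtain ⟨hS, hSH⟩ := mem_cliqueFinset.1 hS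
  refine mem_cliqueFinset.2 ⟨by rw [card_map, hS], ?_⟩
  rw [powersetCard_map]
  exact map_subset_map.2 hSH

end Cliques

theorem matchingLE.map {V W : Type*} {H : Finset (Finset V)} {k : ℕ} (hm : matchingLE H k)
    (f : V ↪ W) : matchingLE (H.map (mapEmbedding f).toEmbedding) k := by
  intro M hM hdisj
  obtain ⟨M, hMH, rfl⟩ := subset_map_iff.1 hM
  rw [coe_map, (mapEmbedding f).toEmbedding.injective.injOn.pairwise_image] at hdisj
  rw [card_map]
  exact hm M hMH fun E hE F hF hEF => (disjoint_map f).1 (hdisj hE hF hEF)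

section Swap
variable {α : Type*} [DecidableEq α] {i j : α} {F : Finset α}

theorem map_swap_map_swap (i j : α) (F : Finset α) :
    (F.map (swap i j).toEmbedding).map (swap i j).toEmbedding = F := by
  ext x
  simp [mem_map_equiv]

theorem map_swap_of_notMem (hi : i ∉ F) (hj : j ∉ F) : F.map (swap i j).toEmbedding = F := by
  ext x
  simp only [mem_map_equiv, symm_swap, swap_apply_def]
  split_ifs with h h' <;> simp_all

theorem map_swap_of_mem (hi : i ∈ F) (hj : j ∈ F) : F.map (swap i j).toEmbedding = F := by
  ext x
  simp only [mem_map_equiv, symm_swap, swap_apply_def]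
  split_ifs with h h' <;> simp_all

theorem map_swap_eq_insert_erase (hj : j ∈ F) (hi : i ∉ F) :
    F.map (swap i j).toEmbedding = insert i (F.erase j) := by
  ext x
  simp only [mem_map_equiv, symm_swap, swap_apply_def, mem_insert, mem_erase]
  split_ifs with h h' <;> subst_vars <;> simp_all

end Swap

theorem exists_matching_of_forall_insert_mem {V : Type*} [DecidableEq V]
    {H : Finset (Finset V)} {p : ℕ} (q : ℕ) {B D : Finset V} (hBD : Disjoint B D)
    (hB : p * q ≤ B.card) (hD : q ≤ D.card)
    (hH : ∀ P ⊆ B, P.card = p → ∀ t ∈ D, insert t P ∈ H) :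
    ∃ M ⊆ H, M.card = q ∧ (M : Set (Finset V)).Pairwise Disjoint ∧ ∀ F ∈ M, F ⊆ B ∪ D := by
  induction q generalizing B D with
  | zero => exact ⟨∅, empty_subset H, card_empty, by simp, by simp⟩
  | succ q ih =>
    rw [Nat.mul_succ] at hB
    obtain ⟨t, ht⟩ : D.Nonempty := card_pos.1 (by omega)
    obtain ⟨P, hPB, hP⟩ := exists_subset_card_eq (show p ≤ B.card by omega)
    obtain ⟨M, hMH, hM, hMdisj, hMBD⟩ := ih (hBD.mono sdiff_subset (erase_subset t D))
      (by rw [card_sdiff_of_subset hPB]; omega) (by rw [card_erase_of_mem ht]; omega)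
      fun P' hP'B hP' t' ht' => hH P' (hP'B.trans sdiff_subset) hP' t' (mem_of_mem_erase ht')
    have hdisj : Disjoint (insert t P) (B \ P ∪ D.erase t) := by
      refine disjoint_insert_left.2 ⟨?_, disjoint_union_right.2
        ⟨disjoint_sdiff, hBD.mono hPB (erase_subset t D)⟩⟩
      simp only [mem_union, mem_sdiff, notMem_erase, or_false]
      exact fun h => disjoint_left.1 hBD h.1 ht
    have hnew : insert t P ∉ M := fun h =>
      (insert_nonempty t P).ne_empty (disjoint_self.1 (hdisj.mono_right (hMBD _ h)))
    refine ⟨insert (insert t P) M, insert_subset (hH P hPB hP t ht) hMH,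
      by rw [card_insert_of_notMem hnew, hM], ?_, ?_⟩
    · rw [coe_insert]
      exact hMdisj.insert_of_symm fun F hF _ => hdisj.mono_right (hMBD F hF)
    · refine forall_mem_insert _ _ _ |>.2 ⟨insert_subset (mem_union_right B ht)
        (hPB.trans subset_union_left), fun F hF => (hMBD F hF).trans ?_⟩
      exact union_subset_union sdiff_subset (erase_subset t D)

section Shift
variable {n : ℕ} {H : Finset (Finset (Fin n))} {i j : Fin n} {E F : Finset (Fin n)}

theorem shiftEdge_eq_ite :
    shiftEdge H i j E = if j ∈ E ∧ i ∉ E ∧ E.map (swap i j).toEmbedding ∉ H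
      then E.map (swap i j).toEmbedding else E := by
  by_cases h : j ∈ E ∧ i ∉ E
  · simp only [shiftEdge, map_swap_eq_insert_erase h.1 h.2]
  · rw [shiftEdge, if_neg fun h' => h ⟨h'.1, h'.2.1⟩, if_neg fun h' => h ⟨h'.1, h'.2.1⟩]

theorem mem_shift_iff :
    F ∈ shift H i j ↔ (F ∈ H ∧ (j ∈ F → i ∉ F → F.map (swap i j).toEmbedding ∈ H)) ∨
      (i ∈ F ∧ j ∉ F ∧ F.map (swap i j).toEmbedding ∈ H) := by
  constructor
  · intro hF
    obtain ⟨E, hE, rfl⟩ := mem_image.1 hF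
    rw [shiftEdge_eq_ite]
    split_ifs with h
    · obtain ⟨hj, hi, -⟩ := h
      refine Or.inr ⟨?_, ?_, by rwa [map_swap_map_swap]⟩ <;> simpa [mem_map_equiv]
    · exact Or.inl ⟨hE, fun hj hi => not_not.1 fun h' => h ⟨hj, hi, h'⟩⟩
  · rintro (⟨hF, hmove⟩ | ⟨hi, hj, hsw⟩)
    · refine mem_image.2 ⟨F, hF, ?_⟩
      rw [shiftEdge_eq_ite, if_neg fun h => h.2.2 (hmove h.1 h.2.1)]
    · by_cases hF : F ∈ H
      · refine mem_image.2 ⟨F, hF, ?_⟩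
        rw [shiftEdge_eq_ite, if_neg fun h => hj h.1]
      · refine mem_image.2 ⟨_, hsw, ?_⟩
        rw [shiftEdge_eq_ite, map_swap_map_swap, if_pos ⟨by simpa [mem_map_equiv],
          by simpa [mem_map_equiv], hF⟩]

theorem shiftEdge_injOn : Set.InjOn (shiftEdge H i j) H := by
  intro E hE F hF h
  simp only [shiftEdge_eq_ite] at h
  split_ifs at h with hEmove hFmove hFmove
  · exact map_injective _ h
  · exact absurd (h ▸ hF) hEmove.2.2
  · exact absurd (h ▸ hE) hFmove.2.2
  · exact h

theorem card_shift : (shift H i j).card = H.card :=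
  card_image_of_injOn shiftEdge_injOn

/-- If a matching of `S_{ij}(H)` uses an edge outside `H`, then swapping `i` and `j` in all of
its edges gives a matching of `H`. -/
theorem matchingLE.shift {k : ℕ} (hm : matchingLE H k) :
    matchingLE (shift H i j) k := by
  intro M hM hdisj
  by_cases hMH : M ⊆ H
  · exact hm M hMH hdisj
  obtain ⟨F₀, hF₀M, hF₀H⟩ := not_subset.1 hMH
  obtain ⟨hiF₀, -, hswF₀⟩ := (mem_shift_iff.1 (hM hF₀M)).resolve_left fun h => hF₀H h.1
  refine hm.map (swap i j).toEmbedding M (fun F hF => mem_map.2 ⟨F.map (swap i j).toEmbedding,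
    ?_, map_swap_map_swap i j F⟩) hdisj
  by_cases hF₀ : F = F₀
  · exact hF₀ ▸ hswF₀
  have hiF : i ∉ F := fun hiF => disjoint_left.1 (hdisj hF hF₀M hF₀) hiF hiF₀
  rcases mem_shift_iff.1 (hM hF) with ⟨hFH, hmove⟩ | ⟨hiF', -⟩
  · by_cases hjF : j ∈ F
    · exact hmove hjF hiF
    · rwa [map_swap_of_notMem hiF hjF]
  · exact absurd hiF' hiF

theorem shift_cliqueFinset_subset {r s : ℕ} :
    shift (cliqueFinset r s H) i j ⊆ cliqueFinset r s (shift H i j) := by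
  intro T hT
  rcases mem_shift_iff.1 hT with ⟨hTC, hmove⟩ | ⟨hiT, hjT, hswT⟩
  · refine mem_cliqueFinset.2 ⟨(mem_cliqueFinset.1 hTC).1, fun f hf => ?_⟩
    obtain ⟨hfT, hf⟩ := mem_powersetCard.1 hf
    refine mem_shift_iff.2 (Or.inl ⟨mem_of_mem_cliqueFinset hTC hfT hf, fun hjf hif => ?_⟩)
    have hswT : T.map (swap i j).toEmbedding ∈ cliqueFinset r s H := by
      by_cases hiT : i ∈ T
      · rwa [map_swap_of_mem hiT (hfT hjf)]
      · exact hmove (hfT hjf) hiT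
    exact mem_of_mem_cliqueFinset hswT (map_subset_map.2 hfT) (by rw [card_map, hf])
  · obtain ⟨hswT_card, -⟩ := mem_cliqueFinset.1 hswT
    refine mem_cliqueFinset.2 ⟨by rwa [card_map] at hswT_card, fun f hf => ?_⟩
    obtain ⟨hfT, hf⟩ := mem_powersetCard.1 hf
    have hswf : f.map (swap i j).toEmbedding ∈ H :=
      mem_of_mem_cliqueFinset hswT (map_subset_map.2 hfT) (by rw [card_map, hf])
    have hjf : j ∉ f := fun h => hjT (hfT h)
    by_cases hif : i ∈ f
    · exact mem_shift_iff.2 (Or.inr ⟨hif, hjf, hswf⟩)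
    · rw [map_swap_of_notMem hif hjf] at hswf
      exact mem_shift_iff.2 (Or.inl ⟨hswf, fun h => absurd h hjf⟩)

theorem cliqueCount_le_shift {r s : ℕ} : cliqueCount r s H ≤ cliqueCount r s (shift H i j) := by
  rw [← card_cliqueFinset, ← card_cliqueFinset, ← card_shift]
  exact card_le_card shift_cliqueFinset_subset

def weight (H : Finset (Finset (Fin n))) : ℕ :=
  ∑ E ∈ H, ∑ x ∈ E, (x : ℕ)

theorem sum_shiftEdge_lt (hij : i < j) (h : shiftEdge H i j E ≠ E) :
    ∑ x ∈ shiftEdge H i j E, (x : ℕ) < ∑ x ∈ E, (x : ℕ) := by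
  rw [shiftEdge_eq_ite] at h ⊢
  split_ifs at h ⊢ with hmove
  · rw [map_swap_eq_insert_erase hmove.1 hmove.2.1,
      sum_insert fun h => hmove.2.1 (mem_of_mem_erase h), ← sum_erase_add E _ hmove.1]
    have := Fin.lt_def.1 hij
    omega
  · exact absurd rfl h

theorem weight_shift_lt (hij : i < j) (hne : shift H i j ≠ H) :
    weight (shift H i j) < weight H := by
  obtain ⟨E, hE, hmoved⟩ : ∃ E ∈ H, shiftEdge H i j E ≠ E := by
    by_contra! h
    exact hne ((image_congr h).trans image_id)
  rw [weight, shift, sum_image shiftEdge_injOn]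
  refine sum_lt_sum (fun F _ => ?_) ⟨E, hE, sum_shiftEdge_lt hij hmoved⟩
  rcases eq_or_ne (shiftEdge H i j F) F with h | h
  · rw [h]
  · exact (sum_shiftEdge_lt hij h).le

theorem exists_isStable_cliqueCount_le {k r s : ℕ} (hm : matchingLE H k) :
    ∃ H' : Finset (Finset (Fin n)), IsStable H' ∧ matchingLE H' k ∧
      cliqueCount r s H ≤ cliqueCount r s H' := by
  induction hw : weight H using Nat.strong_induction_on generalizing H with
  | _ w ih =>
  by_cases hst : IsStable H
  · exact ⟨H, hst, hm, le_rfl⟩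
  obtain ⟨i, j, hij, hne⟩ : ∃ i j, i < j ∧ shift H i j ≠ H := by simpa [IsStable] using hst
  obtain ⟨H', hst', hm', hle⟩ := ih _ (hw ▸ weight_shift_lt hij hne) hm.shift rfl
  exact ⟨H', hst', hm', cliqueCount_le_shift.trans hle⟩

theorem IsStable.map_swap_mem (hst : IsStable H) (hij : i < j) (hE : E ∈ H) (hj : j ∈ E)
    (hi : i ∉ E) : E.map (swap i j).toEmbedding ∈ H := by
  rw [← hst i j hij] at hE
  exact (mem_shift_iff.1 hE).elim (fun h => h.2 hj hi) fun h => absurd h.1 hi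

end Shift

section Stable
variable {n k r s : ℕ} {H : Finset (Finset (Fin n))}

/-- If a clique of a stable `H` had a vertex `v ≥ rk + r - 1`, then pairing `k + 1` disjoint
`(r - 1)`-subsets of the clique with `k + 1` vertices `t ≤ v` would give `k + 1` disjoint edges:
each `P ∪ {v}` is an edge, and stability moves `v` down to `t`. -/
theorem IsStable.val_lt_of_mem_clique (hst : IsStable H) (hm : matchingLE H k) (hr : 0 < r)
    (hs : (r - 1) * k + r ≤ s) {S : Finset (Fin n)} (hS : S ∈ cliqueFinset r s H)
    {v : Fin n} (hv : v ∈ S) : (v : ℕ) < r * k + r - 1 := by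
  by_contra! hvm
  have hB' : (r - 1) * (k + 1) = (r - 1) * k + (r - 1) := Nat.mul_succ _ _
  have hD' : (r - 1) * (k + 1) + (k + 1) = r * k + r := by
    rw [← Nat.succ_mul, Nat.succ_eq_add_one, Nat.sub_one_add_one hr.ne', Nat.mul_succ]
  obtain ⟨B, hBS, hB⟩ := exists_subset_card_eq (show (r - 1) * (k + 1) ≤ (S.erase v).card by
    rw [card_erase_of_mem hv, (mem_cliqueFinset.1 hS).1]; omega)
  obtain ⟨D, hDv, hD⟩ := exists_subset_card_eq (show k + 1 ≤ (Iic v \ B).card from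
    le_trans (by rw [Fin.card_Iic]; omega) (le_card_sdiff B (Iic v)))
  have hBD : Disjoint B D := disjoint_sdiff.mono_right hDv
  have hedges : ∀ P ⊆ B, P.card = r - 1 → ∀ t ∈ D, insert t P ∈ H := by
    intro P hPB hP t ht
    have hvP : v ∉ P := fun h => notMem_erase v S (hBS (hPB h))
    have hvPH : insert v P ∈ H := mem_of_mem_cliqueFinset hS
      (insert_subset hv ((hPB.trans hBS).trans (erase_subset v S)))
      (by rw [card_insert_of_notMem hvP, hP]; omega)
    rcases (mem_Iic.1 (mem_sdiff.1 (hDv ht)).1).lt_or_eq with htv | rfl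
    · have htP : t ∉ insert v P := by
        simp only [mem_insert, htv.ne, false_or]
        exact fun h => disjoint_left.1 hBD (hPB h) ht
      have := hst.map_swap_mem htv hvPH (mem_insert_self v P) htP
      rwa [map_swap_eq_insert_erase (mem_insert_self v P) htP, erase_insert hvP] at this
    · exact hvPH
  obtain ⟨M, hMH, hM, hMdisj, -⟩ :=
    exists_matching_of_forall_insert_mem (k + 1) hBD hB.ge hD.ge hedges
  have := hm M hMH hMdisj
  omega

theorem IsStable.cliqueFinset_subset (hst : IsStable H) (hm : matchingLE H k) (hr : 0 < r)
    (hs : (r - 1) * k + r ≤ s) :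
    cliqueFinset r s H ⊆ ({x : Fin n | (x : ℕ) < r * k + r - 1} : Finset (Fin n)).powersetCard s :=
  fun _ hS => mem_powersetCard.2 ⟨fun v hv => mem_filter.2
    ⟨mem_univ v, hst.val_lt_of_mem_clique hm hr hs hS hv⟩, (mem_cliqueFinset.1 hS).1⟩

end Stable

theorem Fnka_self_eq (n k r : ℕ) :
    Fnka n k r r = ({x : Fin n | (x : ℕ) < r * k + r - 1} : Finset (Fin n)).powersetCard r := by
  ext E
  simp only [Fnka, mem_filter, mem_powersetCard, subset_univ, true_and]
  constructor
  · rintro ⟨hE, hr⟩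
    have hall := card_filter_eq_iff.1 (le_antisymm (card_filter_le _ _) (by rw [hE]; exact hr))
    exact ⟨fun x hx => mem_filter.2 ⟨mem_univ x, hall x hx⟩, hE⟩
  · rintro ⟨hEX, hE⟩
    rw [filter_true_of_mem fun x hx => (mem_filter.1 (hEX hx)).2, hE]
    exact ⟨rfl, le_rfl⟩

theorem max_cliques_large_s_general {V : Type*} [Fintype V] [DecidableEq V] {n k r s : ℕ}
    (hr0 : 0 < r)
    (hs1 : (r - 1) * k + r ≤ s)
    (hn : r * k + r - 1 ≤ n)
    (hcard : Fintype.card V = n)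
    (H : Finset (Finset V))
    (hmatch : matchingLE H k) :
    cliqueCount r s H ≤ cliqueCount r s (Fnka n k r r) ∧
      cliqueCount r s (Fnka n k r r) = Nat.choose (r * k + r - 1) s := by
  set X : Finset (Fin n) := {x | (x : ℕ) < r * k + r - 1}
  have hX : X.card = r * k + r - 1 := by rw [Fin.card_filter_val_lt, min_eq_right hn]
  have hFnka : cliqueCount r s (Fnka n k r r) = (r * k + r - 1).choose s := by
    rw [← card_cliqueFinset, Fnka_self_eq, cliqueFinset_powersetCard hr0 (by omega),
      card_powersetCard, hX]
  let e : V ↪ Fin n := (Fintype.equivFinOfCardEq hcard).toEmbedding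
  obtain ⟨H', hst, hm', hle⟩ := exists_isStable_cliqueCount_le (r := r) (s := s) (hmatch.map e)
  refine ⟨?_, hFnka⟩
  calc cliqueCount r s H ≤ cliqueCount r s (H.map (mapEmbedding e).toEmbedding) :=
        cliqueCount_le_map e H
    _ ≤ cliqueCount r s H' := hle
    _ ≤ (X.powersetCard s).card := card_le_card (hst.cliqueFinset_subset hm' hr0 hs1)
    _ = cliqueCount r s (Fnka n k r r) := by rw [card_powersetCard, hX, hFnka]

/-- Theorem 1.3 (III), first part. -/
theorem max_cliques_large_s {V : Type*} [Fintype V] [DecidableEq V] {n k r s : ℕ}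
    (hn0 : 0 < n) (hk0 : 0 < k) (hr0 : 0 < r) (hs0 : 0 < s)
    (hs1 : (r - 1) * k + r ≤ s) (hs2 : s ≤ r * k + r - 1)
    (hn : r * k + r - 1 ≤ n)
    (hcard : Fintype.card V = n)
    (H : Finset (Finset V)) (hunif : ∀ E ∈ H, E.card = r)
    (hmatch : matchingLE H k) :
    cliqueCount r s H ≤ cliqueCount r s (Fnka n k r r) ∧
      cliqueCount r s (Fnka n k r r) = Nat.choose (r * k + r - 1) s :=
  max_cliques_large_s_general hr0 hs1 hn hcard H hmatch
end

section
/- Let n, k, r, s be positive integers with (r−1)k + r ≤ s ≤ rk + r − 1 and n ≥ rk + r − 1, and let H be an r-graph on n vertices with matching number ν(H) ≤ k. If K_s^r(H) < C(rk+r−1, s), then in fact K_s^r(H) ≤ C(rk+r−1, s) − C(rk−1, s−r). -/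
open Finset

/-!
Write `s + d + 1 = r (k + 1)`; the hypotheses on `s` say exactly that `d < k`. The heart of the
proof is that the union `W` of all `s`-cliques has at most `s + d` vertices. Otherwise fix a
clique `A` and a clique `B` with `b = |B \ A|` maximal. Then `min b (d + 1)` vertices of `B \ A`,
padded by a few vertices of `A ∩ B`, are cut into edges inside `B`; every other vertex `w ∈ W \ A`
lies in a clique meeting `A` in at least `s - b` vertices, so enough of them to have `d + 1`
vertices outside `A` in all can be completed greedily to edges by private `(r - 1)`-sets of `A`;
the rest of `A` is cut into edges.
If `A ∩ B` is too small for the padding, `A` and `B \ A` alone suffice. Either way `H` gets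
`k + 1` disjoint edges, contradicting `ν(H) ≤ k`.

So all cliques lie in an `(s + d)`-set `W'`. If fewer than `C(s + d, s)` of them exist, some
`s`-subset of `W'` contains a non-edge `E`, and no clique contains `E`: this excludes the
`C(s + d - r, s - r)` supersets of `E`.
-/

section Arithmetic

variable {r s d k : ℕ}

theorem le_add_div_of_mul_le {n a X : ℕ} (hr : 0 < r) (h : r * n ≤ r * a + X) :
    n ≤ a + X / r := by
  rw [← Nat.mul_add_div hr]
  exact (Nat.le_div_iff_mul_le hr).mpr (by linarith)

theorem exists_add_eq_mul_of_pos (hr : 0 < r) (g : ℕ) : ∃ c f, g + f = r * c ∧ f < r := by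
  have h1 := Nat.div_add_mod (g + r - 1) r
  have h2 := Nat.mod_lt (g + r - 1) hr
  exact ⟨(g + r - 1) / r, r - 1 - (g + r - 1) % r, by omega, by omega⟩

theorem stars_add_le {b f : ℕ} (hsd : s + d + 1 = r * (k + 1)) (hdk : d < k) (hbd : b ≤ d)
    (hbs : b ≤ s) (hf : f < r) : (d + 1 - b) * (r - 1) + b + f ≤ s := by
  obtain ⟨e, rfl⟩ : ∃ e, d = b + e := ⟨d - b, by omega⟩
  obtain ⟨r, rfl⟩ : ∃ r', r = r' + 1 := ⟨r - 1, by omega⟩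
  rw [show b + e + 1 - b = e + 1 by omega, Nat.add_sub_cancel]
  have h := Nat.mul_le_mul_left r (show b + e + 1 ≤ k by omega)
  rcases Nat.eq_zero_or_pos r with rfl | hr
  · omega
  · have : b ≤ r * b := Nat.le_mul_of_pos_left b hr
    ring_nf at hsd h this ⊢
    omega

theorem succ_le_add_add_div {c f g : ℕ} (hr : 0 < r) (hsd : s + d + 1 = r * (k + 1))
    (hgf : g + f = r * c) (hg : g ≤ d + 1) (hO : (d + 1 - g) * (r - 1) + f ≤ s) :
    k + 1 ≤ c + (d + 1 - g) + (s - f - (d + 1 - g) * (r - 1)) / r := by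
  apply le_add_div_of_mul_le hr
  have hgo : g + (d + 1 - g) = d + 1 := by omega
  generalize d + 1 - g = o at hO hgo ⊢
  have : o * (r - 1) + o = r * o := by
    obtain ⟨r, rfl⟩ : ∃ r', r = r' + 1 := ⟨r - 1, by omega⟩
    simp only [Nat.add_sub_cancel]
    ring
  rw [Nat.mul_add r c o]
  omega

theorem succ_le_div_add_div {t : ℕ} (hsd : s + d + 1 = r * (k + 1)) (hdk : d < k)
    (ht : t + 2 ≤ r) : k + 1 ≤ (s - t) / r + s / r := by
  apply le_add_div_of_mul_le (by omega)
  have h1 := Nat.div_add_mod (s - t) r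
  have h2 := Nat.mod_lt (s - t) (show 0 < r by omega)
  obtain ⟨k, rfl⟩ : ∃ k', k = k' + 1 := ⟨k - 1, by omega⟩
  obtain ⟨r, rfl⟩ : ∃ r', r = r' + 2 := ⟨r - 2, by omega⟩
  ring_nf at hsd h1 h2 ⊢
  omega

end Arithmetic

theorem Finset.card_inter_sub_card_le_card_inter_sdiff {V : Type*} [DecidableEq V]
    (S T F : Finset V) : #(S ∩ T) - #F ≤ #(S ∩ (T \ F)) := by
  simpa only [inter_sdiff_assoc] using le_card_sdiff F (S ∩ T)

/-- Edges are required to be nonempty so that matchings inside disjoint sets are disjoint. -/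
def HasMatchingIn {V : Type*} (H : Finset (Finset V)) (X : Finset V) (m : ℕ) : Prop :=
  ∃ M ⊆ H, (M : Set (Finset V)).Pairwise Disjoint ∧ (∀ e ∈ M, e.Nonempty ∧ e ⊆ X) ∧ m ≤ #M

section Matchings

variable {V : Type*} {H : Finset (Finset V)} {r : ℕ}

namespace HasMatchingIn

variable {X Y : Finset V} {a b m k : ℕ}

theorem le_of_matchingLE (h : HasMatchingIn H X m) (hH : matchingLE H k) : m ≤ k := by
  obtain ⟨M, hMH, hM, -, hm⟩ := h
  exact hm.trans (hH M hMH hM)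

theorem of_le {m' : ℕ} (h : HasMatchingIn H X m) (hm : m' ≤ m) : HasMatchingIn H X m' := by
  obtain ⟨M, hMH, hM, hMX, hmM⟩ := h
  exact ⟨M, hMH, hM, hMX, hm.trans hmM⟩

theorem mono (h : HasMatchingIn H X m) (hXY : X ⊆ Y) : HasMatchingIn H Y m := by
  obtain ⟨M, hMH, hM, hMX, hm⟩ := h
  exact ⟨M, hMH, hM, fun e he => ⟨(hMX e he).1, (hMX e he).2.trans hXY⟩, hm⟩

theorem union [DecidableEq V] (hXY : Disjoint X Y) (hX : HasMatchingIn H X a)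
    (hY : HasMatchingIn H Y b) : HasMatchingIn H (X ∪ Y) (a + b) := by
  obtain ⟨M, hMH, hM, hMX, ha⟩ := hX
  obtain ⟨N, hNH, hN, hNY, hb⟩ := hY
  have hsep : ∀ e ∈ M, ∀ f ∈ N, Disjoint e f := fun e he f hf =>
    hXY.mono (hMX e he).2 (hNY f hf).2
  have hMN : Disjoint M N := disjoint_left.mpr fun e he heN =>
    (hMX e he).1.ne_empty (disjoint_self.mp (hsep e he e heN))
  refine ⟨M ∪ N, union_subset hMH hNH, ?_, ?_, ?_⟩
  · rw [coe_union, Set.pairwise_union_of_symm]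
    exact ⟨hM, hN, fun e he f hf _ => hsep e he f hf⟩
  · intro e he
    rcases mem_union.mp he with he | he
    · exact ⟨(hMX e he).1, (hMX e he).2.trans subset_union_left⟩
    · exact ⟨(hNY e he).1, (hNY e he).2.trans subset_union_right⟩
  · rw [card_union_of_disjoint hMN]
    omega

end HasMatchingIn

variable [DecidableEq V]

theorem hasMatchingIn_of_subset_clique {S X : Finset V} {m : ℕ} (hr : 0 < r)
    (hS : S.powersetCard r ⊆ H) (hXS : X ⊆ S) (hm : r * m ≤ #X) : HasMatchingIn H X m := by
  induction m generalizing X with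
  | zero => exact ⟨∅, empty_subset _, by simp, by simp, le_rfl⟩
  | succ m ih =>
    rw [Nat.mul_succ] at hm
    obtain ⟨e, heX, he⟩ := exists_subset_card_eq (show r ≤ #X by omega)
    have hedge : HasMatchingIn H e 1 := by
      refine ⟨{e}, singleton_subset_iff.mpr (hS (mem_powersetCard.mpr ⟨heX.trans hXS, he⟩)),
        by simp, ?_, by simp⟩
      simpa [← card_pos, he] using hr
    have hrest : HasMatchingIn H (X \ e) m :=
      ih (sdiff_subset.trans hXS) (by rw [card_sdiff_of_subset heX]; omega)
    simpa [add_comm, union_sdiff_of_subset heX] using hedge.union disjoint_sdiff hrest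

theorem exists_hasMatchingIn_stars {S : V → Finset V} (hr : 0 < r) (O : Finset V) {T : Finset V}
    (hS : ∀ w ∈ O, w ∈ S w ∧ (S w).powersetCard r ⊆ H) (hOT : Disjoint O T)
    (hOS : ∀ w ∈ O, #O * (r - 1) ≤ #(S w ∩ T)) :
    ∃ Z ⊆ T, #Z = #O * (r - 1) ∧ HasMatchingIn H (O ∪ Z) #O := by
  induction O using Finset.induction_on generalizing T with
  | empty => exact ⟨∅, empty_subset _, by simp, ⟨∅, by simp, by simp, by simp, le_rfl⟩⟩
  | insert a O ha ih =>
    have hcard : #(insert a O) = #O + 1 := card_insert_of_notMem ha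
    have haS := hS a (mem_insert_self a O)
    obtain ⟨F, hF, hFcard⟩ := exists_subset_card_eq (s := S a ∩ T) (n := r - 1) <| by
      have := hOS a (mem_insert_self a O)
      rw [hcard, add_mul] at this
      omega
    have hFT : F ⊆ T := hF.trans inter_subset_right
    have hOT' := (disjoint_insert_left.mp hOT).2
    obtain ⟨Z, hZ, hZcard, hOZ⟩ := ih (T := T \ F) (fun w hw => hS w (mem_insert_of_mem hw))
      (hOT'.mono_right sdiff_subset) fun w hw => by
        have h1 := hOS w (mem_insert_of_mem hw)
        have h2 := card_inter_sub_card_le_card_inter_sdiff (S w) T F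
        rw [hcard, add_mul] at h1
        omega
    have hstar : HasMatchingIn H (insert a F) 1 := by
      refine hasMatchingIn_of_subset_clique hr haS.2
        (insert_subset haS.1 (hF.trans inter_subset_left)) ?_
      rw [card_insert_of_notMem fun haF => disjoint_left.mp hOT (mem_insert_self a O) (hFT haF)]
      omega
    refine ⟨F ∪ Z, union_subset hFT (hZ.trans sdiff_subset), ?_, ?_⟩
    · rw [card_union_of_disjoint (disjoint_left.mpr fun x hxF hxZ => (mem_sdiff.mp (hZ hxZ)).2 hxF),
        hFcard, hZcard, hcard]
      ring
    · have hdisj : Disjoint (insert a F) (O ∪ Z) := by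
        have hT := disjoint_left.mp hOT
        have hZ' : ∀ x ∈ Z, x ∈ T ∧ x ∉ F := fun x hx => mem_sdiff.mp (hZ hx)
        rw [disjoint_left]
        grind
      have := hstar.union hdisj hOZ
      rw [hcard, add_comm]
      convert this using 1
      ext x; simp only [mem_union, mem_insert]; tauto


theorem hasMatchingIn_of_two_cliques_and_stars {A B G F O : Finset V} {S : V → Finset V} {c : ℕ}
    (hr : 0 < r) (hA : A.powersetCard r ⊆ H) (hB : B.powersetCard r ⊆ H)
    (hG : G ⊆ B \ A) (hF : F ⊆ A ∩ B) (hc : r * c ≤ #G + #F)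
    (hOA : Disjoint O A) (hOG : Disjoint O G)
    (hS : ∀ w ∈ O, w ∈ S w ∧ (S w).powersetCard r ⊆ H)
    (hOS : ∀ w ∈ O, #O * (r - 1) ≤ #(S w ∩ (A \ F))) :
    HasMatchingIn H (A ∪ G ∪ O) (c + #O + (#A - #F - #O * (r - 1)) / r) := by
  have hG' : ∀ x ∈ G, x ∈ B ∧ x ∉ A := fun x hx => mem_sdiff.mp (hG hx)
  have hF' : ∀ x ∈ F, x ∈ A ∧ x ∈ B := fun x hx => mem_inter.mp (hF hx)
  have hGF : Disjoint G F := disjoint_left.mpr fun x hxG hxF => (hG' x hxG).2 (hF' x hxF).1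
  have hmGF : HasMatchingIn H (G ∪ F) c :=
    hasMatchingIn_of_subset_clique hr hB (union_subset (hG.trans sdiff_subset)
      (hF.trans inter_subset_right)) (by rwa [card_union_of_disjoint hGF])
  obtain ⟨Z, hZ, hZcard, hmOZ⟩ :=
    exists_hasMatchingIn_stars hr O hS (hOA.mono_right sdiff_subset) hOS
  have hZ' : ∀ x ∈ Z, x ∈ A ∧ x ∉ F := fun x hx => mem_sdiff.mp (hZ hx)
  have hFZ : F ∪ Z ⊆ A := union_subset (hF.trans inter_subset_left) (hZ.trans sdiff_subset)
  have hmA : HasMatchingIn H (A \ (F ∪ Z)) ((#A - #F - #O * (r - 1)) / r) := by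
    refine hasMatchingIn_of_subset_clique hr hA sdiff_subset ?_
    rw [card_sdiff_of_subset hFZ, card_union_of_disjoint
      (disjoint_left.mpr fun x hxF hxZ => (hZ' x hxZ).2 hxF), hZcard, Nat.sub_add_eq]
    exact Nat.mul_div_le _ r
  have hO := disjoint_left.mp hOA
  have hOG := disjoint_left.mp hOG
  refine ((hmGF.union ?_ hmOZ).union ?_ hmA).mono ?_
  · rw [disjoint_left]; grind
  · rw [disjoint_left]; grind
  · intro x; simp only [mem_union, mem_sdiff]; grind

end Matchings

section UnionOfCliques

variable {V : Type*} [DecidableEq V] {H 𝒞 : Finset (Finset V)} {A B : Finset V} {r s d k : ℕ}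

theorem hasMatchingIn_union_of_card_inter_add_two_le (hsd : s + d + 1 = r * (k + 1))
    (hdk : d < k) (hA : #A = s ∧ A.powersetCard r ⊆ H) (hB : #B = s ∧ B.powersetCard r ⊆ H)
    (ht : #(A ∩ B) + 2 ≤ r) : HasMatchingIn H (A ∪ B) (k + 1) := by
  have hr : 0 < r := by omega
  have hBA : #(B \ A) = s - #(A ∩ B) := by
    rw [← hB.1, ← card_inter_add_card_sdiff B A, inter_comm]
    omega
  have hmA : HasMatchingIn H A (s / r) :=
    hasMatchingIn_of_subset_clique hr hA.2 subset_rfl (hA.1 ▸ Nat.mul_div_le _ r)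
  have hmB : HasMatchingIn H (B \ A) ((s - #(A ∩ B)) / r) :=
    hasMatchingIn_of_subset_clique hr hB.2 sdiff_subset (hBA ▸ Nat.mul_div_le _ r)
  rw [← union_sdiff_self_eq_union]
  exact (hmA.union disjoint_sdiff hmB).of_le <| by
    have := succ_le_div_add_div hsd hdk ht
    omega

theorem hasMatchingIn_sup_of_le_card_inter {c f : ℕ} (hr : 0 < r)
    (hsd : s + d + 1 = r * (k + 1)) (hdk : d < k)
    (h𝒞 : ∀ S ∈ 𝒞, #S = s ∧ S.powersetCard r ⊆ H) (hA : A ∈ 𝒞) (hB : B ∈ 𝒞)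
    (hBmax : ∀ C ∈ 𝒞, #(C \ A) ≤ #(B \ A)) (hW : s + d + 1 ≤ #(𝒞.sup id))
    (hgf : min #(B \ A) (d + 1) + f = r * c) (hfr : f < r) (hf : f ≤ #(A ∩ B)) :
    HasMatchingIn H (𝒞.sup id) (k + 1) := by
  set W := 𝒞.sup id
  set g := min #(B \ A) (d + 1)
  obtain ⟨hAs, hAH⟩ := h𝒞 A hA
  have hAB : #(A ∩ B) + #(B \ A) = s := by
    rw [inter_comm, card_inter_add_card_sdiff, (h𝒞 B hB).1]
  obtain ⟨G, hG, hGcard⟩ := exists_subset_card_eq (min_le_left #(B \ A) (d + 1))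
  obtain ⟨F, hF, hFcard⟩ := exists_subset_card_eq hf
  have hAW : A ⊆ W := le_sup (f := id) hA
  have hGW : G ⊆ W \ A := hG.trans (sdiff_subset_sdiff (le_sup (f := id) hB) le_rfl)
  obtain ⟨O, hO, hOcard⟩ := exists_subset_card_eq (s := (W \ A) \ G) (n := d + 1 - g) <| by
    have := le_card_sdiff A W
    rw [card_sdiff_of_subset hGW]
    omega
  have hO' : ∀ w ∈ O, (w ∈ W ∧ w ∉ A) ∧ w ∉ G := fun w hw => by simpa using hO hw
  choose! S hS using fun w (hw : w ∈ O) => by simpa [W, mem_sup] using (hO' w hw).1.1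
  have hcount : (d + 1 - g) * (r - 1) + f ≤ s ∧ ∀ w ∈ O, #O * (r - 1) ≤ #(S w ∩ (A \ F)) := by
    rcases le_or_gt #(B \ A) d with hbd | hdb
    · have h := stars_add_le hsd hdk hbd (by omega) hfr
      have hg : g = #(B \ A) := min_eq_left (by omega)
      refine ⟨by rw [hg]; omega, fun w hw => ?_⟩
      have hSw := (hS w hw).1
      have h1 := card_inter_sub_card_le_card_inter_sdiff (S w) A F
      have h2 := card_inter_add_card_sdiff (S w) A
      rw [(h𝒞 _ hSw).1] at h2
      have := hBmax _ hSw
      rw [hOcard, hg]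
      omega
    · have hg : g = d + 1 := min_eq_right (by omega)
      simp only [hOcard, hg, Nat.sub_self, zero_mul, zero_le, implies_true, and_true]
      omega
  have hm := hasMatchingIn_of_two_cliques_and_stars (c := c) hr hAH (h𝒞 B hB).2 hG hF (by omega)
    (disjoint_left.mpr fun w hw => (hO' w hw).1.2) (disjoint_left.mpr fun w hw => (hO' w hw).2)
    (fun w hw => ⟨(hS w hw).2, (h𝒞 _ (hS w hw).1).2⟩) hcount.2
  rw [hAs, hFcard, hOcard] at hm
  refine (hm.mono (union_subset (union_subset hAW (hGW.trans sdiff_subset))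
    (hO.trans (sdiff_subset.trans sdiff_subset)))).of_le ?_
  exact succ_le_add_add_div hr hsd hgf (min_le_right _ _) hcount.1

theorem card_sup_le_of_matchingLE (hr : 0 < r) (hsd : s + d + 1 = r * (k + 1)) (hdk : d < k)
    (hH : matchingLE H k) (h𝒞 : ∀ S ∈ 𝒞, #S = s ∧ S.powersetCard r ⊆ H) :
    #(𝒞.sup id) ≤ s + d := by
  by_contra! hW
  obtain ⟨A, hA⟩ : 𝒞.Nonempty := by
    by_contra! h
    simp [h] at hW
  obtain ⟨B, hB, hBmax⟩ := exists_max_image 𝒞 (fun C => #(C \ A)) ⟨A, hA⟩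
  obtain ⟨c, f, hgf, hfr⟩ := exists_add_eq_mul_of_pos hr (min #(B \ A) (d + 1))
  have hm : HasMatchingIn H (𝒞.sup id) (k + 1) := by
    by_cases hf : f ≤ #(A ∩ B)
    · exact hasMatchingIn_sup_of_le_card_inter hr hsd hdk h𝒞 hA hB hBmax hW hgf hfr hf
    · exact (hasMatchingIn_union_of_card_inter_add_two_le hsd hdk (h𝒞 A hA) (h𝒞 B hB)
        (by omega)).mono (union_subset (le_sup (f := id) hA) (le_sup (f := id) hB))
  exact absurd (hm.le_of_matchingLE hH) (by omega)

end UnionOfCliques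

theorem card_le_choose_sub_choose {V : Type*} [DecidableEq V] {𝒜 : Finset (Finset V)}
    {W E : Finset V} {s : ℕ} (hEW : E ⊆ W) (hEs : #E ≤ s) (h𝒜 : 𝒜 ⊆ W.powersetCard s)
    (hE : ∀ S ∈ 𝒜, ¬ E ⊆ S) :
    #𝒜 ≤ (#W).choose s - (#W - #E).choose (s - #E) := by
  have hsub : 𝒜 ⊆ (W.powersetCard s).filter (¬ E ⊆ ·) := fun S hS =>
    mem_filter.mpr ⟨h𝒜 hS, hE S hS⟩
  have hsplit := card_filter_add_card_filter_not (s := W.powersetCard s) (E ⊆ ·)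
  rw [card_filter_powersetCard_subset E W s hEW hEs, card_powersetCard] at hsplit
  have := card_le_card hsub
  omega

theorem cliqueCount_le_choose_sub_choose {V : Type*} [Fintype V] [DecidableEq V]
    {H : Finset (Finset V)} {r s d k : ℕ} (hr : 0 < r) (hsd : s + d + 1 = r * (k + 1))
    (hdk : d < k) (hV : s + d ≤ Fintype.card V) (hH : matchingLE H k)
    (hlt : cliqueCount r s H < (s + d).choose s) :
    cliqueCount r s H ≤ (s + d).choose s - (s + d - r).choose (s - r) := by
  set 𝒞 := (univ.powersetCard s).filter (fun S : Finset V => S.powersetCard r ⊆ H)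
  have h𝒞 : ∀ S ∈ 𝒞, #S = s ∧ S.powersetCard r ⊆ H := fun S hS => by
    simp only [𝒞, mem_filter, mem_powersetCard] at hS
    exact ⟨hS.1.2, hS.2⟩
  obtain ⟨W, hW, -, hWcard⟩ := exists_subsuperset_card_eq (subset_univ (𝒞.sup id))
    (card_sup_le_of_matchingLE hr hsd hdk hH h𝒞) (by rwa [card_univ])
  have h𝒞W : 𝒞 ⊆ W.powersetCard s := fun S hS =>
    mem_powersetCard.mpr ⟨(le_sup (f := id) hS).trans hW, (h𝒞 S hS).1⟩
  obtain ⟨S₀, hS₀W, hS₀⟩ := exists_mem_notMem_of_card_lt_card (s := 𝒞) (t := W.powersetCard s) <| by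
    rw [card_powersetCard, hWcard]
    exact hlt
  obtain ⟨hS₀W, hS₀s⟩ := mem_powersetCard.mp hS₀W
  obtain ⟨E, hE, hEH⟩ := not_subset.mp fun h =>
    hS₀ (mem_filter.mpr ⟨mem_powersetCard.mpr ⟨subset_univ _, hS₀s⟩, h⟩)
  obtain ⟨hES₀, hEr⟩ := mem_powersetCard.mp hE
  have := card_le_choose_sub_choose (hES₀.trans hS₀W) (hS₀s ▸ hEr ▸ card_le_card hES₀) h𝒞W
    fun S hS hES => hEH ((h𝒞 S hS).2 (mem_powersetCard.mpr ⟨hES, hEr⟩))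
  rwa [hWcard, hEr] at this

theorem max_cliques_large_s_stability_general {V : Type*} [Fintype V] [DecidableEq V] {n k r s : ℕ}
    (hr0 : 0 < r)
    (hs1 : (r - 1) * k + r ≤ s) (hs2 : s ≤ r * k + r - 1)
    (hn : r * k + r - 1 ≤ n)
    (hcard : Fintype.card V = n)
    (H : Finset (Finset V))
    (hmatch : matchingLE H k)
    (hlt : cliqueCount r s H < Nat.choose (r * k + r - 1) s) :
    cliqueCount r s H ≤ Nat.choose (r * k + r - 1) s - Nat.choose (r * k - 1) (s - r) := by
  obtain ⟨d, hd⟩ : ∃ d, r * k + r - 1 = s + d := ⟨r * k + r - 1 - s, by omega⟩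
  have hrk : (r - 1) * k + k = r * k := by
    rw [← Nat.succ_mul, Nat.succ_eq_add_one, Nat.sub_add_cancel hr0]
  have hsd : s + d + 1 = r * (k + 1) := by rw [Nat.mul_succ]; omega
  have hdk : d < k := by omega
  rw [hd] at hlt hn ⊢
  rw [show r * k - 1 = s + d - r by omega]
  exact cliqueCount_le_choose_sub_choose hr0 hsd hdk (hcard ▸ hn) hmatch hlt

/-- Theorem 1.3 (III), second part. -/
theorem max_cliques_large_s_stability {V : Type*} [Fintype V] [DecidableEq V] {n k r s : ℕ}
    (hn0 : 0 < n) (hk0 : 0 < k) (hr0 : 0 < r) (hs0 : 0 < s)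
    (hs1 : (r - 1) * k + r ≤ s) (hs2 : s ≤ r * k + r - 1)
    (hn : r * k + r - 1 ≤ n)
    (hcard : Fintype.card V = n)
    (H : Finset (Finset V)) (hunif : ∀ E ∈ H, E.card = r)
    (hmatch : matchingLE H k)
    (hlt : cliqueCount r s H < Nat.choose (r * k + r - 1) s) :
    cliqueCount r s H ≤ Nat.choose (r * k + r - 1) s - Nat.choose (r * k - 1) (s - r) :=
  max_cliques_large_s_stability_general hr0 hs1 hs2 hn hcard H hmatch hlt
end

section
/- Let n, k, r, s be positive integers with k + r ≤ s ≤ rk + r − 1 and n ≥ rk + r − 1, and set a = ⌊(s−r)/k⌋ + 1. Let H be a stable r-graph on the vertex set [n] with matching number ν(H) ≤ k. If every edge of H is contained in at least one s-clique of H, then every edge E of H satisfies |E ∩ [rk+a−1]| ≥ a. -/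
open Finset

/-!
Suppose an edge `E` has at most `b = a - 1` vertices below `r k + b`, and let `S ⊇ E` be an
`s`-clique with elements `σ 0 < ⋯ < σ (s - 1)`. At most `s - r + b` elements of `S` lie below
`r k + b`, so `σ (s - r + b) ≥ r k + b`; together with `σ j ≥ j` and `s - r ≥ b k` this gives
`m + (k + 1) i ≤ σ (s - r + i)` for all `m ≤ k` and `i < r`. A stable family is closed under
lowering the vertices of an edge one by one, so each progression
`{m, m + (k + 1), …, m + (r - 1)(k + 1)}`, dominated by the `r`-subset `{σ (s - r + i)}` of the
clique, is an edge. These `k + 1` progressions are pairwise disjoint, contradicting `ν(H) ≤ k`.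
-/

theorem Finset.card_filter_add_card_le_of_subset {α : Type*} {E S : Finset α} (p : α → Prop)
    [DecidablePred p] (h : E ⊆ S) : #(S.filter p) + #E ≤ #S + #(E.filter p) := by
  have hE := E.card_filter_add_card_filter_not p
  have hS := S.card_filter_add_card_filter_not p
  have := card_le_card (filter_subset_filter (fun x => ¬ p x) h)
  omega

theorem StrictMono.val_add_sub_le {s n : ℕ} {f : Fin s → Fin n} (hf : StrictMono f)
    {i j : Fin s} (hij : i ≤ j) : (f i : ℕ) + (j - i) ≤ f j := by
  have hcard := card_le_card_of_injOn f (s := Ioc i j) (t := Ioc (f i) (f j))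
    (fun x hx => by
      rw [mem_coe, mem_Ioc] at hx ⊢
      exact ⟨hf hx.1, hf.monotone hx.2⟩) hf.injective.injOn
  rw [Fin.card_Ioc, Fin.card_Ioc] at hcard
  have := Fin.le_def.1 (hf.monotone hij)
  omega

theorem Finset.le_orderEmbOfFin_of_card_filter_lt_le {n s : ℕ} (S : Finset (Fin n))
    (h : #S = s) {c : ℕ} {j : Fin s} (hc : #(S.filter fun x : Fin n => (x : ℕ) < c) ≤ j) :
    c ≤ S.orderEmbOfFin h j := by
  by_contra! hlt
  have hsub : (Iic j).map (S.orderEmbOfFin h).toEmbedding ⊆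
      S.filter fun x : Fin n => (x : ℕ) < c := by
    intro y hy
    obtain ⟨i, hi, rfl⟩ := mem_map.1 hy
    exact mem_filter.2 ⟨S.orderEmbOfFin_mem h i,
      lt_of_le_of_lt ((S.orderEmbOfFin h).monotone (mem_Iic.1 hi)) hlt⟩
  have hcard := card_le_card hsub
  rw [card_map, Fin.card_Iic] at hcard
  omega

theorem IsStable.insert_erase_mem {n : ℕ} {H : Finset (Finset (Fin n))} (hH : IsStable H)
    {E : Finset (Fin n)} (hE : E ∈ H) {i j : Fin n} (hij : i < j) (hj : j ∈ E) (hi : i ∉ E) :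
    insert i (E.erase j) ∈ H := by
  by_contra h
  have hshift : shiftEdge H i j E ∈ shift H i j := mem_image_of_mem _ hE
  rw [hH i j hij, shiftEdge, if_pos ⟨hj, hi, h⟩] at hshift
  exact h hshift

theorem IsStable.image_mem_of_le {n : ℕ} {H : Finset (Finset (Fin n))} (hH : IsStable H)
    {ι : Type*} [Fintype ι] [DecidableEq ι] {a f : ι → Fin n} (ha : a.Injective)
    (hf : f.Injective) (hle : a ≤ f) (hfH : univ.image f ∈ H) : univ.image a ∈ H := by
  induction hd : #{i | a i ≠ f i} using Nat.strong_induction_on generalizing f with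
  | _ d ih =>
  rcases ({i | a i ≠ f i} : Finset ι).eq_empty_or_nonempty with hfix | hne
  · have : a = f := funext fun i => by simpa using filter_eq_empty_iff.1 hfix (mem_univ i)
    rwa [this]
  -- Lower the smallest `a i` that differs from `f i`: it cannot be a value of `f`, so
  -- the shift `S_{a i, f i}` moves `f i` down to `a i`.
  obtain ⟨i, hi, hmin⟩ := ({i | a i ≠ f i} : Finset ι).exists_min_image a hne
  have hai : a i ∉ univ.image f := by
    simp only [mem_image, mem_univ, true_and, not_exists]
    intro j hj
    have hji : j ≠ i := by rintro rfl; exact (mem_filter.1 hi).2 hj.symm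
    have hlt : a j < a i := lt_of_le_of_ne (hj ▸ hle j) (ha.ne hji)
    exact (hmin j (mem_filter.2 ⟨mem_univ _, hj ▸ ha.ne hji⟩)).not_gt hlt
  set f' := Function.update f i (a i)
  have himage : univ.image f' = insert (a i) ((univ.image f).erase (f i)) := by
    ext y
    simp only [mem_image, mem_univ, true_and, mem_insert, mem_erase, f', Function.update_apply]
    constructor
    · rintro ⟨j, rfl⟩
      by_cases hji : j = i
      · simp [hji]
      · exact Or.inr ⟨by simpa [hji] using hf.ne hji, j, by simp [hji]⟩
    · rintro (rfl | ⟨hy, j, rfl⟩)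
      · exact ⟨i, by simp⟩
      · exact ⟨j, by simp [show j ≠ i by rintro rfl; exact hy rfl]⟩
  have hfilter : ({j | a j ≠ f' j} : Finset ι) = ({j | a j ≠ f j} : Finset ι).erase i := by
    ext j
    by_cases hji : j = i <;> simp [f', hji]
  have hpos : 0 < d := hd ▸ card_pos.2 ⟨i, hi⟩
  refine ih (d - 1) (by omega) (f := f') ?_ ?_ ?_ (by rw [hfilter, card_erase_of_mem hi, hd])
  · have hai' : ∀ j, f j ≠ a i := fun j hj => hai (hj ▸ mem_image_of_mem f (mem_univ j))
    intro j j' h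
    by_cases hj : j = i <;> by_cases hj' : j' = i <;>
      simp only [f', Function.update_apply, hj, hj', if_true, if_false] at h
    · exact hj.trans hj'.symm
    · exact absurd h.symm (hai' j')
    · exact absurd h (hai' j)
    · exact hf h
  · intro j
    by_cases hji : j = i
    · simp [f', hji]
    · simpa [f', hji] using hle j
  · rw [himage]
    exact hH.insert_erase_mem hfH (lt_of_le_of_ne (hle i) (mem_filter.1 hi).2)
      (mem_image_of_mem f (mem_univ i)) hai

theorem IsStable.image_mem_of_le_orderEmbOfFin {n p r : ℕ} {H : Finset (Finset (Fin n))}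
    (hH : IsStable H) {S : Finset (Fin n)} (hS : #S = p + r) (hSH : S.powersetCard r ⊆ H)
    {a : Fin r → Fin n} (ha : a.Injective)
    (hle : ∀ i, a i ≤ S.orderEmbOfFin hS (Fin.natAdd p i)) : univ.image a ∈ H := by
  have hinj : (fun i => S.orderEmbOfFin hS (Fin.natAdd p i)).Injective :=
    (S.orderEmbOfFin hS).injective.comp (Fin.natAdd_injective r p)
  refine hH.image_mem_of_le ha hinj hle (hSH (mem_powersetCard.2 ⟨?_, ?_⟩))
  · exact image_subset_iff.2 fun i _ => S.orderEmbOfFin_mem hS _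
  · rw [card_image_of_injective _ hinj, card_univ, Fintype.card_fin]

theorem matchingLE.card_le_of_injective {V ι κ : Type*} [DecidableEq V] [Fintype ι]
    [Nonempty ι] [Fintype κ] {H : Finset (Finset V)} {k : ℕ} (hH : matchingLE H k)
    {e : ι × κ → V} (he : e.Injective) (hmem : ∀ m, univ.image (fun i => e (i, m)) ∈ H) :
    Fintype.card κ ≤ k := by
  set fibre : κ → Finset V := fun m => univ.image fun i => e (i, m)
  have hdisj : ∀ m m', m ≠ m' → Disjoint (fibre m) (fibre m') := by
    intro m m' hm
    simp only [fibre, disjoint_left, mem_image, mem_univ, true_and]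
    rintro _ ⟨i, rfl⟩ ⟨i', hi'⟩
    exact hm (congrArg Prod.snd (he hi')).symm
  have hinj : fibre.Injective := by
    intro m m' h
    by_contra hm
    obtain ⟨i⟩ := ‹Nonempty ι›
    exact disjoint_left.1 (hdisj m m' hm) (mem_image_of_mem _ (mem_univ i))
      (h ▸ mem_image_of_mem _ (mem_univ i))
  have hM := hH (univ.image fibre) (image_subset_iff.2 fun m _ => hmem m) <| by
    simp only [coe_image, coe_univ, Set.image_univ]
    rintro _ ⟨m, rfl⟩ _ ⟨m', rfl⟩ hne
    exact hdisj m m' fun h => hne (h ▸ rfl)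
  rwa [card_image_of_injective _ hinj, card_univ] at hM

theorem progression_le_of_strictMono {n k p r : ℕ} {σ : Fin (p + r) → Fin n}
    (hσ : StrictMono σ) (hb : p / k < r)
    (hσb : r * k + p / k ≤ σ (Fin.natAdd p ⟨p / k, hb⟩)) (m : Fin (k + 1)) (i : Fin r) :
    (m : ℕ) + (k + 1) * i ≤ σ (Fin.natAdd p i) := by
  have hm := m.isLt
  have hi := i.isLt
  have hbk : p / k * k ≤ p := Nat.div_mul_le_self p k
  rcases lt_or_ge (i : ℕ) (p / k) with hib | hbi
  · have hpos := hσ.val_add_sub_le (i := ⟨0, by omega⟩) (j := Fin.natAdd p i)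
      (Fin.le_def.2 (Nat.zero_le _))
    have : (i + 1) * k ≤ p / k * k := Nat.mul_le_mul_right _ hib
    simp only [Fin.val_natAdd, Nat.sub_zero] at hpos
    linarith
  · have hstep := hσ.val_add_sub_le (i := Fin.natAdd p ⟨p / k, hb⟩) (j := Fin.natAdd p i)
      (Fin.le_def.2 (by simp only [Fin.val_natAdd]; omega))
    have : (i + 1) * k ≤ r * k := Nat.mul_le_mul_right _ hi
    simp only [Fin.val_natAdd, Nat.add_sub_add_left] at hstep
    zify [hbi] at hstep hσb this ⊢
    linarith

theorem stable_edges_meet_initial_segment_general {n k r s a : ℕ}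
    (hr0 : 0 < r)
    (hs1 : k + r ≤ s) (hs2 : s ≤ r * k + r - 1)
    (ha : a = (s - r) / k + 1)
    (H : Finset (Finset (Fin n))) (hunif : ∀ E ∈ H, E.card = r)
    (hstable : IsStable H) (hmatch : matchingLE H k)
    (hcl : ∀ E ∈ H, ∃ S : Finset (Fin n),
      S.card = s ∧ S.powersetCard r ⊆ H ∧ E ⊆ S) :
    ∀ E ∈ H, a ≤ (E.filter (fun x : Fin n => (x : ℕ) < r * k + a - 1)).card := by
  intro E hE
  obtain ⟨S, hS, hSH, hES⟩ := hcl E hE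
  obtain ⟨p, rfl⟩ : ∃ p, s = p + r := ⟨s - r, by omega⟩
  have hb : p / k < r := Nat.div_lt_of_lt_mul (by rw [Nat.mul_comm]; omega)
  rw [Nat.add_sub_cancel] at ha
  subst ha
  by_contra! hlow
  rw [← add_assoc, Nat.add_sub_cancel] at hlow
  set σ := S.orderEmbOfFin hS
  have hσb : r * k + p / k ≤ σ (Fin.natAdd p ⟨p / k, hb⟩) := by
    refine S.le_orderEmbOfFin_of_card_filter_lt_le hS ?_
    have := card_filter_add_card_le_of_subset (fun x : Fin n => (x : ℕ) < r * k + p / k) hES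
    simp only [Fin.val_natAdd, hunif E hE] at this ⊢
    omega
  have hdom := progression_le_of_strictMono σ.strictMono hb hσb
  have hn : r * (k + 1) ≤ n := by
    have hlast := hdom (Fin.last k) ⟨r - 1, by omega⟩
    have := (σ (Fin.natAdd p ⟨r - 1, by omega⟩)).isLt
    simp only [Fin.val_last] at hlast
    have hr : (k + 1) * (r - 1) + (k + 1) = r * (k + 1) := by
      rw [← Nat.mul_add_one, Nat.sub_add_cancel hr0, Nat.mul_comm]
    omega
  have : Nonempty (Fin r) := ⟨⟨0, hr0⟩⟩
  -- `finProdFinEquiv (i, m)` is the vertex `m + (k + 1) i`.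
  have hfibre : ∀ m : Fin (k + 1),
      univ.image (fun i => Fin.castLE hn (finProdFinEquiv (i, m))) ∈ H := fun m =>
    hstable.image_mem_of_le_orderEmbOfFin hS hSH ((Fin.castLE_injective hn).comp
      (finProdFinEquiv.injective.comp (Prod.mk_left_injective m)))
      fun i => Fin.le_def.2 (by simpa using hdom m i)
  have hcard := hmatch.card_le_of_injective
    ((Fin.castLE_injective hn).comp finProdFinEquiv.injective) hfibre
  rw [Fintype.card_fin] at hcard
  omega

/-- Proposition 3.2. -/
theorem stable_edges_meet_initial_segment {n k r s a : ℕ}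
    (hn0 : 0 < n) (hk0 : 0 < k) (hr0 : 0 < r) (hs0 : 0 < s)
    (hs1 : k + r ≤ s) (hs2 : s ≤ r * k + r - 1) (hn : r * k + r - 1 ≤ n)
    (ha : a = (s - r) / k + 1)
    (H : Finset (Finset (Fin n))) (hunif : ∀ E ∈ H, E.card = r)
    (hstable : IsStable H) (hmatch : matchingLE H k)
    (hcl : ∀ E ∈ H, ∃ S : Finset (Fin n),
      S.card = s ∧ S.powersetCard r ⊆ H ∧ E ⊆ S) :
    ∀ E ∈ H, a ≤ (E.filter (fun x : Fin n => (x : ℕ) < r * k + a - 1)).card :=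
  stable_edges_meet_initial_segment_general hr0 hs1 hs2 ha H hunif hstable hmatch hcl
end

section
/- Let n, k, r, a be positive integers with a < r and rk ≤ n, and let H be an r-graph on a vertex set V of n vertices. Suppose A_1, A_2, …, A_k are pairwise disjoint a-element subsets of V such that deg_H(A_i) > r(k−1)·C(n−a−1, r−a−1) for every i. Then H contains a matching of size k; in fact, there exist pairwise disjoint edges E_1, …, E_k of H with A_i ⊆ E_i for each i. -/
open Finset

/-! Choose the edges greedily, one index at a time. The edge through `A i` has to avoid the
`k - 1` other sets (edges already chosen, or prescribed sets `A j` still waiting), at most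
`r (k - 1)` vertices in all. Each edge through `A i` meeting this set `B` contains `A i ∪ {v}`
for some `v ∈ B`, so there are at most `|B| · C(n - a - 1, r - a - 1)` of them, and the degree
bound leaves an edge through `A i` avoiding `B`. -/

open Function

def IsDisjointEnlargement {ι V : Type*} (r : ℕ) (A F : ι → Finset V) : Prop :=
  (∀ i, A i ⊆ F i) ∧ (∀ i, (F i).card ≤ r) ∧ Pairwise (Disjoint on F)

section Greedy

variable {ι V : Type*} [Fintype ι] [DecidableEq ι] [DecidableEq V] {r : ℕ}
  {H : Finset (Finset V)} {A F : ι → Finset V}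

lemma IsDisjointEnlargement.exists_update (hF : IsDisjointEnlargement r A F)
    (hH : ∀ E ∈ H, E.card ≤ r)
    (hext : ∀ i B, Disjoint (A i) B → B.card ≤ r * (Fintype.card ι - 1) →
      ∃ E ∈ H, A i ⊆ E ∧ Disjoint E B)
    (t : ι) :
    ∃ E ∈ H, IsDisjointEnlargement r A (update F t E) := by
  obtain ⟨hAF, hFr, hFd⟩ := hF
  set B := (univ.erase t).biUnion F
  have hFB : ∀ j ≠ t, F j ⊆ B := fun j hj => subset_biUnion_of_mem F (mem_erase.2 ⟨hj, mem_univ j⟩)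
  have hAB : Disjoint (A t) B :=
    (disjoint_biUnion_right _ _ _).2 fun j hj => (hFd (mem_erase.1 hj).1.symm).mono_left (hAF t)
  have hBcard : B.card ≤ r * (Fintype.card ι - 1) :=
    calc B.card ≤ ∑ j ∈ univ.erase t, (F j).card := card_biUnion_le
      _ ≤ ∑ _j ∈ univ.erase t, r := sum_le_sum fun j _ => hFr j
      _ = r * (Fintype.card ι - 1) := by
        rw [sum_const, card_erase_of_mem (mem_univ t), card_univ, smul_eq_mul, mul_comm]
  obtain ⟨E, hEH, hAE, hEB⟩ := hext t B hAB hBcard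
  refine ⟨E, hEH, fun i => ?_, fun i => ?_, fun i j hij => ?_⟩ <;>
    simp only [onFun, update_apply]
  · split_ifs with hi
    exacts [hi ▸ hAE, hAF i]
  · split_ifs
    exacts [hH E hEH, hFr i]
  · split_ifs with hi hj hj
    · exact absurd (hi.trans hj.symm) hij
    · exact hEB.mono_right (hFB j hj)
    · exact (hEB.mono_right (hFB i hi)).symm
    · exact hFd hij

lemma exists_isDisjointEnlargement_forall_mem (hH : ∀ E ∈ H, E.card ≤ r)
    (hA : ∀ i, (A i).card ≤ r) (hAd : Pairwise (Disjoint on A))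
    (hext : ∀ i B, Disjoint (A i) B → B.card ≤ r * (Fintype.card ι - 1) →
      ∃ E ∈ H, A i ⊆ E ∧ Disjoint E B)
    (s : Finset ι) :
    ∃ F, IsDisjointEnlargement r A F ∧ ∀ i ∈ s, F i ∈ H := by
  induction s using Finset.induction_on with
  | empty => exact ⟨A, ⟨fun _ => subset_rfl, hA, hAd⟩, by simp⟩
  | insert t s _ ih =>
    obtain ⟨F, hF, hFH⟩ := ih
    obtain ⟨E, hEH, hE⟩ := hF.exists_update hH hext t
    refine ⟨_, hE, fun i hi => ?_⟩
    rw [update_apply]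
    split_ifs with hit
    exacts [hEH, hFH i ((mem_insert.1 hi).resolve_left hit)]

theorem exists_pairwise_disjoint_edges_superset (hH : ∀ E ∈ H, E.card ≤ r)
    (hA : ∀ i, (A i).card ≤ r) (hAd : Pairwise (Disjoint on A))
    (hext : ∀ i B, Disjoint (A i) B → B.card ≤ r * (Fintype.card ι - 1) →
      ∃ E ∈ H, A i ⊆ E ∧ Disjoint E B) :
    ∃ E : ι → Finset V, (∀ i, E i ∈ H) ∧ (∀ i, A i ⊆ E i) ∧ Pairwise (Disjoint on E) := by
  obtain ⟨F, ⟨hAF, -, hFd⟩, hFH⟩ := exists_isDisjointEnlargement_forall_mem hH hA hAd hext univ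
  exact ⟨F, fun i => hFH i (mem_univ i), hAF, hFd⟩

end Greedy

section Degree

variable {V : Type*} [Fintype V] [DecidableEq V] {r : ℕ} {H : Finset (Finset V)}

lemma degOf_le_choose (hunif : ∀ E ∈ H, E.card = r) (S : Finset V) :
    degOf H S ≤ (Fintype.card V - S.card).choose (r - S.card) := by
  have hcodomain : ((univ \ S).powersetCard (r - S.card)).card =
      (Fintype.card V - S.card).choose (r - S.card) := by
    rw [card_powersetCard, card_univ_sdiff]
  rw [degOf, ← hcodomain]
  refine card_le_card_of_injOn (· \ S) (fun E hE => ?_) (fun E₁ hE₁ E₂ hE₂ h => ?_)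
  · obtain ⟨hEH, hSE⟩ := mem_filter.1 hE
    rw [mem_coe, mem_powersetCard, card_sdiff_of_subset hSE, hunif E hEH]
    exact ⟨sdiff_subset_sdiff (subset_univ E) subset_rfl, rfl⟩
  · rw [← sdiff_union_of_subset (mem_filter.1 hE₁).2, ← sdiff_union_of_subset (mem_filter.1 hE₂).2]
    exact congrArg (· ∪ S) h

lemma exists_mem_superset_disjoint (hunif : ∀ E ∈ H, E.card = r) {A B : Finset V}
    (hAB : Disjoint A B)
    (hdeg : B.card * (Fintype.card V - A.card - 1).choose (r - A.card - 1) < degOf H A) :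
    ∃ E ∈ H, A ⊆ E ∧ Disjoint E B := by
  by_contra! hmeet
  have hcover : H.filter (A ⊆ ·) ⊆ B.biUnion fun v => H.filter (insert v A ⊆ ·) := by
    intro E hE
    obtain ⟨hEH, hAE⟩ := mem_filter.1 hE
    obtain ⟨v, hvE, hvB⟩ := not_disjoint_iff.1 (hmeet E hEH hAE)
    exact mem_biUnion.2 ⟨v, hvB, mem_filter.2 ⟨hEH, insert_subset hvE hAE⟩⟩
  have hle : degOf H A ≤ B.card * (Fintype.card V - A.card - 1).choose (r - A.card - 1) :=
    calc degOf H A ≤ ∑ v ∈ B, degOf H (insert v A) := (card_le_card hcover).trans card_biUnion_le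
      _ ≤ ∑ _v ∈ B, (Fintype.card V - A.card - 1).choose (r - A.card - 1) := by
        refine sum_le_sum fun v hv => ?_
        have hvA : v ∉ A := disjoint_right.1 hAB hv
        simpa [card_insert_of_notMem hvA, Nat.sub_sub] using degOf_le_choose hunif (insert v A)
      _ = _ := by rw [sum_const, smul_eq_mul]
  exact hle.not_gt hdeg

end Degree

theorem matching_of_large_degrees_general {V : Type*} [Fintype V] [DecidableEq V] {n k r a : ℕ}
    (har : a < r)
    (hcard : Fintype.card V = n)
    (H : Finset (Finset V)) (hunif : ∀ E ∈ H, E.card = r)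
    (A : Fin k → Finset V) (hA : ∀ i, (A i).card = a)
    (hdisj : ∀ i j, i ≠ j → Disjoint (A i) (A j))
    (hdeg : ∀ i, r * (k - 1) * Nat.choose (n - a - 1) (r - a - 1) < degOf H (A i)) :
    ∃ E : Fin k → Finset V, (∀ i, E i ∈ H) ∧ (∀ i, A i ⊆ E i) ∧
      ∀ i j, i ≠ j → Disjoint (E i) (E j) := by
  subst hcard
  refine exists_pairwise_disjoint_edges_superset (fun E hE => (hunif E hE).le)
    (fun i => (hA i).trans_le har.le) hdisj fun i B hAB hB => ?_
  refine exists_mem_superset_disjoint hunif hAB (lt_of_le_of_lt ?_ (hdeg i))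
  rw [hA i]
  exact Nat.mul_le_mul_right _ (by simpa using hB)

/-- Lemma 3.3 (greedy matching through prescribed `a`-sets). -/
theorem matching_of_large_degrees {V : Type*} [Fintype V] [DecidableEq V] {n k r a : ℕ}
    (hn0 : 0 < n) (hk0 : 0 < k) (hr0 : 0 < r) (ha0 : 0 < a)
    (har : a < r) (hrk : r * k ≤ n)
    (hcard : Fintype.card V = n)
    (H : Finset (Finset V)) (hunif : ∀ E ∈ H, E.card = r)
    (A : Fin k → Finset V) (hA : ∀ i, (A i).card = a)
    (hdisj : ∀ i j, i ≠ j → Disjoint (A i) (A j))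
    (hdeg : ∀ i, r * (k - 1) * Nat.choose (n - a - 1) (r - a - 1) < degOf H (A i)) :
    ∃ E : Fin k → Finset V, (∀ i, E i ∈ H) ∧ (∀ i, A i ⊆ E i) ∧
      ∀ i j, i ≠ j → Disjoint (E i) (E j) :=
  matching_of_large_degrees_general har hcard H hunif A hA hdisj hdeg
end

section
/- Let k, r, s be positive integers with r ≤ s ≤ (r−1)(k+1), set a = ⌊(s−r)/k⌋ + 1 (so a ≤ r−1), and define the real number n*(k,r,s) = (r/a)^{(s−r+a)/(r−a)} · ((rk+r−1−s)/s). Then for every integer n with s ≤ n ≤ n*(k,r,s), one has K_s^r(F^{(r)}_{n,k,a}) < C(rk+r−1, s). -/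
open Finset

/-! Every `s`-clique of `F^{(r)}_{n,k,a}` meets the first `m = ak + a - 1` vertices in at least
`p = s - r + a` points (otherwise some `r`-subset of it would have fewer than `a` points there),
so there are at most `C(m, p) C(n, q)` cliques, where `q = r - a`. With `M = rk + r - 1` one has
`(m + 1) / (M + 1) = a / r`, whence `r^p C(m, p) ≤ a^p C(M, p)`; together with the identity
`C(M, s) C(s, q) = C(M, p) C(M - p, q)` the claim reduces to
`a^p C(n, q) C(s, q) < r^p C(M - p, q)`. This follows from `q! C(n, q) ≤ n^q`, `C(s, q) ≤ s^q`,
`(M - s)^q < q! C(M - p, q)` and the hypothesis on `n`, which says exactly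
`a^p (ns)^q ≤ r^p (M - s)^q`. -/

theorem card_add_le_card_inter_add {V : Type*} [DecidableEq V] {S B : Finset V} {a r : ℕ}
    (ha : 0 < a) (har : a ≤ r) (hrS : r ≤ #S)
    (h : ∀ R ⊆ S, #R = r → a ≤ #(R ∩ B)) : #S + a ≤ #(S ∩ B) + r := by
  by_contra! hlt
  have hsplit := card_inter_add_card_sdiff S B
  obtain ⟨C, hCsub, hC⟩ := exists_subset_card_eq (s := S \ B) (n := r - a + 1) (by omega)
  obtain ⟨R, hCR, hRS, hR⟩ :=
    exists_subsuperset_card_eq (hCsub.trans sdiff_subset) (by omega) hrS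
  have hdisj : Disjoint (R ∩ B) C :=
    disjoint_left.2 fun x hx hxC => (mem_sdiff.1 (hCsub hxC)).2 (mem_inter.1 hx).2
  have hunion : #(R ∩ B) + #C ≤ #R := by
    rw [← card_union_of_disjoint hdisj]
    exact card_le_card (union_subset inter_subset_left hCR)
  have := h R hRS hR
  omega

theorem card_filter_powersetCard_le_choose_mul_choose {V : Type*} [Fintype V] [DecidableEq V]
    (B : Finset V) (s t : ℕ) :
    #{S ∈ powersetCard s univ | t ≤ #(S ∩ B)} ≤
      (#B).choose t * (Fintype.card V).choose (s - t) := by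
  calc #{S ∈ powersetCard s univ | t ≤ #(S ∩ B)}
      ≤ #((B.powersetCard t ×ˢ powersetCard (s - t) univ).image fun p => p.1 ∪ p.2) := by
        refine card_le_card fun S hS => ?_
        obtain ⟨hS, htS⟩ := mem_filter.1 hS
        obtain ⟨A, hA, hAt⟩ := exists_subset_card_eq htS
        have hAS : A ⊆ S := hA.trans inter_subset_left
        refine mem_image.2 ⟨(A, S \ A), mem_product.2 ⟨?_, ?_⟩, union_sdiff_of_subset hAS⟩
        · exact mem_powersetCard.2 ⟨hA.trans inter_subset_right, hAt⟩
        · rw [mem_powersetCard, card_sdiff_of_subset hAS, (mem_powersetCard.1 hS).2, hAt]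
          exact ⟨subset_univ _, rfl⟩
    _ ≤ (#B).choose t * (Fintype.card V).choose (s - t) := by
        rw [← card_univ, ← card_powersetCard, ← card_powersetCard, ← card_product]
        exact card_image_le

theorem cliqueCount_Fnka_le (n k r a s : ℕ) (ha : 0 < a) (har : a ≤ r) (hrs : r ≤ s) :
    cliqueCount r s (Fnka n k r a) ≤ (a * k + a - 1).choose (s - r + a) * n.choose (r - a) := by
  set B : Finset (Fin n) := {x : Fin n | (x : ℕ) < a * k + a - 1}
  have hsub : {S ∈ powersetCard s (univ : Finset (Fin n)) | S.powersetCard r ⊆ Fnka n k r a} ⊆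
      {S ∈ powersetCard s (univ : Finset (Fin n)) | s - r + a ≤ #(S ∩ B)} := by
    refine monotone_filter_right _ fun S hS hclique => ?_
    have hSs := (mem_powersetCard.1 hS).2
    have := card_add_le_card_inter_add (B := B) ha har (hSs ▸ hrs) fun R hRS hR => by
      have hRE := (mem_filter.1 (hclique (mem_powersetCard.2 ⟨hRS, hR⟩))).2
      rwa [inter_filter, inter_univ]
    omega
  calc cliqueCount r s (Fnka n k r a) ≤ #{S ∈ powersetCard s univ | s - r + a ≤ #(S ∩ B)} :=
        card_le_card hsub
    _ ≤ (#B).choose (s - r + a) * (Fintype.card (Fin n)).choose (s - (s - r + a)) :=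
        card_filter_powersetCard_le_choose_mul_choose B s (s - r + a)
    _ ≤ (a * k + a - 1).choose (s - r + a) * n.choose (r - a) := by
        rw [Fintype.card_fin, show s - (s - r + a) = r - a by omega]
        exact Nat.mul_le_mul_right _
          (Nat.choose_le_choose _ (Fin.card_filter_val_lt.trans_le (min_le_right _ _)))

theorem pow_mul_choose_le_pow_mul_choose {a r m M : ℕ} (har : a ≤ r)
    (h : a * (M + 1) = r * (m + 1)) (j : ℕ) :
    r ^ j * m.choose j ≤ a ^ j * M.choose j := by
  refine Nat.le_of_mul_le_mul_left ?_ j.factorial_pos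
  calc j.factorial * (r ^ j * m.choose j) = ∏ i ∈ range j, r * (m - i) := by
        rw [prod_mul_distrib, prod_const, card_range, ← Nat.descFactorial_eq_prod_range,
          Nat.descFactorial_eq_factorial_mul_choose]
        ring
    _ ≤ ∏ i ∈ range j, a * (M - i) := by
        refine prod_le_prod' fun i _ => ?_
        rcases le_or_gt i m with him | hmi
        · have h1 : r * (m - i) + r * (i + 1) = a * (M + 1) := by
            rw [h, ← mul_add, ← Nat.add_assoc, Nat.sub_add_cancel him]
          have h2 : a * (M + 1) ≤ a * (M - i) + a * (i + 1) := by
            rw [← mul_add]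
            exact Nat.mul_le_mul_left _ (by omega)
          have h3 : a * (i + 1) ≤ r * (i + 1) := Nat.mul_le_mul_right _ har
          omega
        · simp [Nat.sub_eq_zero_of_le hmi.le]
    _ = j.factorial * (a ^ j * M.choose j) := by
        rw [prod_mul_distrib, prod_const, card_range, ← Nat.descFactorial_eq_prod_range,
          Nat.descFactorial_eq_factorial_mul_choose]
        ring

theorem choose_mul_choose_mul_pow_lt {n s q : ℕ} (d : ℕ) (hq : 0 < q) (hqn : q ≤ n)
    (hqs : q ≤ s) :
    n.choose q * s.choose q * d ^ q < (n * s) ^ q * (d + q).choose q := by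
  have hn : q.factorial * n.choose q ≤ n ^ q := by
    rw [← Nat.descFactorial_eq_factorial_mul_choose]
    exact Nat.descFactorial_le_pow n q
  have hd : d ^ q < q.factorial * (d + q).choose q :=
    calc d ^ q < (d + 1) ^ q := Nat.pow_lt_pow_left d.lt_succ_self hq.ne'
      _ = (d + q + 1 - q) ^ q := by rw [Nat.add_right_comm, Nat.add_sub_cancel]
      _ ≤ q.factorial * (d + q).choose q := by
        rw [← Nat.descFactorial_eq_factorial_mul_choose]
        exact Nat.pow_sub_le_descFactorial _ q
  have hpos : 0 < n.choose q * s.choose q :=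
    Nat.mul_pos (Nat.choose_pos hqn) (Nat.choose_pos hqs)
  calc n.choose q * s.choose q * d ^ q
        < n.choose q * s.choose q * (q.factorial * (d + q).choose q) :=
        Nat.mul_lt_mul_of_pos_left hd hpos
    _ = q.factorial * n.choose q * s.choose q * (d + q).choose q := by ring
    _ ≤ n ^ q * s ^ q * (d + q).choose q := by
        gcongr
        exact Nat.choose_le_pow s q
    _ = (n * s) ^ q * (d + q).choose q := by rw [mul_pow]

theorem pow_mul_le_of_le_rpow_div {n s r a d p q : ℕ} (ha : 0 < a) (hs : 0 < s) (hq : q ≠ 0)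
    (h : (n : ℝ) ≤ ((r : ℝ) / a) ^ ((p : ℝ) / q) * ((d : ℝ) / s)) :
    a ^ p * (n * s) ^ q ≤ r ^ p * d ^ q := by
  have hr : (0 : ℝ) ≤ r / a := by positivity
  have hpow := pow_le_pow_left₀ n.cast_nonneg h q
  rw [mul_pow, ← Real.rpow_natCast (_ ^ _), ← Real.rpow_mul hr,
    div_mul_cancel₀ _ (Nat.cast_ne_zero.2 hq), Real.rpow_natCast, div_pow, div_pow,
    div_mul_div_comm, le_div_iff₀ (by positivity)] at hpow
  exact_mod_cast (by rw [mul_pow]; linarith : (a : ℝ) ^ p * ((n : ℝ) * s) ^ q ≤ r ^ p * d ^ q)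

theorem choose_add_mul_choose_eq (p q d : ℕ) :
    (p + q + d).choose (p + q) * (p + q).choose q = (p + q + d).choose p * (d + q).choose q := by
  have := Nat.choose_mul (n := p + q + d) (k := p + q) (s := p) (Nat.le_add_right p q)
  rwa [Nat.choose_symm_add (a := p), show p + q + d - p = d + q by omega,
    Nat.add_sub_cancel_left] at this

theorem choose_mul_choose_lt_choose {m n s p q d a r : ℕ} (hpq : p + q = s)
    (ha : 0 < a) (hd : 0 < d) (hq : 0 < q) (hqn : q ≤ n)
    (hm : r ^ p * m.choose p ≤ a ^ p * (s + d).choose p)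
    (hn : a ^ p * (n * s) ^ q ≤ r ^ p * d ^ q) :
    m.choose p * n.choose q < (s + d).choose s := by
  subst hpq
  have hstar := choose_mul_choose_mul_pow_lt d hq hqn (Nat.le_add_left q p)
  refine Nat.lt_of_mul_lt_mul_left (a := r ^ p * (p + q).choose q * d ^ q) ?_
  calc r ^ p * (p + q).choose q * d ^ q * (m.choose p * n.choose q)
      = r ^ p * m.choose p * (n.choose q * (p + q).choose q * d ^ q) := by ring
    _ ≤ a ^ p * (p + q + d).choose p * (n.choose q * (p + q).choose q * d ^ q) :=
        Nat.mul_le_mul_right _ hm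
    _ < a ^ p * (p + q + d).choose p * ((n * (p + q)) ^ q * (d + q).choose q) :=
        Nat.mul_lt_mul_of_pos_left hstar (Nat.mul_pos (pow_pos ha p) (Nat.choose_pos (by omega)))
    _ = a ^ p * (n * (p + q)) ^ q * ((p + q + d).choose p * (d + q).choose q) := by ring
    _ ≤ r ^ p * d ^ q * ((p + q + d).choose p * (d + q).choose q) := Nat.mul_le_mul_right _ hn
    _ = r ^ p * (p + q).choose q * d ^ q * (p + q + d).choose (p + q) := by
        rw [← choose_add_mul_choose_eq]; ring

/-- for `n` below the threshold `n*(k,r,s)`, the construction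
`F^{(r)}_{n,k,a}` has fewer `s`-cliques than `F^{(r)}_{n,k,r}`. -/
theorem cliqueCount_Fnka_lt_of_small_n {k r s a : ℕ}
    (hk0 : 0 < k) (hr0 : 0 < r) (hs0 : 0 < s)
    (hrs : r ≤ s) (hs2 : s ≤ (r - 1) * (k + 1))
    (ha : a = (s - r) / k + 1)
    (n : ℕ) (hsn : s ≤ n)
    (hn : (n : ℝ) ≤ ((r : ℝ) / (a : ℝ)) ^ ((((s : ℝ) - r + a)) / ((r : ℝ) - a)) *
      (((r : ℝ) * k + r - 1 - s) / s)) :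
    cliqueCount r s (Fnka n k r a) < Nat.choose (r * k + r - 1) s := by
  rw [Nat.mul_succ, Nat.sub_one_mul] at hs2
  have ha0 : 0 < a := ha ▸ Nat.succ_pos _
  have har : a < r := by
    have := (Nat.div_lt_iff_lt_mul hk0).2
      (show s - r < (r - 1) * k by rw [Nat.sub_one_mul]; omega)
    omega
  obtain ⟨d, hM, hd0⟩ : ∃ d, r * k + r - 1 = s + d ∧ 0 < d :=
    ⟨r * k + r - 1 - s, by omega, by omega⟩
  have hdR : (d : ℝ) = r * k + r - 1 - s := by
    have : ((r * k + r : ℕ) : ℝ) = s + d + 1 := by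
      exact_mod_cast (by omega : r * k + r = s + d + 1)
    push_cast at this
    linarith
  have hpR : ((s - r + a : ℕ) : ℝ) = s - r + a := by push_cast [Nat.cast_sub hrs]; ring
  have hqR : ((r - a : ℕ) : ℝ) = r - a := Nat.cast_sub har.le
  have hn_nat := pow_mul_le_of_le_rpow_div (n := n) (r := r) (d := d) (p := s - r + a)
    (q := r - a) ha0 hs0 (by omega) (by rwa [hpR, hqR, hdR])
  have hchoose := pow_mul_choose_le_pow_mul_choose (m := a * k + a - 1) (M := r * k + r - 1) har.le
    (by rw [Nat.sub_add_cancel (by omega), Nat.sub_add_cancel (by omega)]; ring) (s - r + a)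
  rw [hM] at hchoose ⊢
  exact (cliqueCount_Fnka_le n k r a s ha0 har.le hrs).trans_lt
    (choose_mul_choose_lt_choose (by omega) ha0 hd0 (by omega) (by omega) hchoose hn_nat)
end

section
/- Let n, k, r, a be positive integers with 1 ≤ a < r and n ≥ r(k+1), and let H be an r-graph on the vertex set [n] with matching number ν(H) ≤ k. Define the a-graph H* on [rk+a−1] whose edges are the a-element subsets A of [rk+a−1] with deg_H(A) > rk·C(n−a−1, r−a−1). Then ν(H*) ≤ k. -/
open Finset

/-! Extend `k + 1` pairwise disjoint high-degree `a`-sets greedily to pairwise disjoint edges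
of `H`. When `A` is extended, the edges already chosen and the other `a`-sets cover at most `rk`
vertices, and each of them lies in at most `C(n - a - 1, r - a - 1)` edges through `A`, so the
degree bound leaves an edge through `A` avoiding all of them. This yields a matching of size
`k + 1` in `H`. -/

section

variable {V : Type*} [Fintype V] [DecidableEq V] {H : Finset (Finset V)} {r : ℕ}

theorem card_filter_superset_le_choose (hunif : ∀ E ∈ H, E.card = r) (S : Finset V) :
    (H.filter (S ⊆ ·)).card ≤ (Fintype.card V - S.card).choose (r - S.card) := by
  rw [← card_compl, ← card_powersetCard]
  refine card_le_card_of_injOn (· \ S) (fun E hE => ?_) fun E₁ hE₁ E₂ hE₂ heq => ?_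
  · obtain ⟨hEH, hSE⟩ := mem_filter.1 hE
    rw [mem_coe, mem_powersetCard, card_sdiff_of_subset hSE, hunif E hEH]
    exact ⟨fun x hx => mem_compl.2 (mem_sdiff.1 hx).2, rfl⟩
  · rw [← sdiff_union_of_subset (mem_filter.1 hE₁).2,
      ← sdiff_union_of_subset (mem_filter.1 hE₂).2]
    exact congrArg (· ∪ S) heq

theorem exists_edge_superset_disjoint (hunif : ∀ E ∈ H, E.card = r) {A F : Finset V}
    (hFA : Disjoint F A)
    (hdeg : F.card * (Fintype.card V - A.card - 1).choose (r - A.card - 1) < degOf H A) :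
    ∃ E ∈ H, A ⊆ E ∧ Disjoint E F := by
  by_contra! hmeet
  have hcover : H.filter (A ⊆ ·) ⊆ F.biUnion fun v => H.filter (insert v A ⊆ ·) := by
    intro E hE
    obtain ⟨hEH, hAE⟩ := mem_filter.1 hE
    obtain ⟨v, hvE, hvF⟩ := not_disjoint_iff.1 (hmeet E hEH hAE)
    exact mem_biUnion.2 ⟨v, hvF, mem_filter.2 ⟨hEH, insert_subset hvE hAE⟩⟩
  have hbound : ∀ v ∈ F, (H.filter (insert v A ⊆ ·)).card ≤
      (Fintype.card V - A.card - 1).choose (r - A.card - 1) := fun v hvF => by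
    simpa only [card_insert_of_notMem (disjoint_left.1 hFA hvF), Nat.sub_sub]
      using card_filter_superset_le_choose hunif (insert v A)
  exact hdeg.not_ge ((card_le_card hcover).trans (card_biUnion_le_card_mul _ _ _ hbound))

theorem exists_matching_extending_highDegree {k a : ℕ} (hunif : ∀ E ∈ H, E.card = r)
    (har : a < r) {M : Finset (Finset V)} (hM : M.card ≤ k + 1) (hMa : ∀ A ∈ M, A.card = a)
    (hMdeg : ∀ A ∈ M, r * k * (Fintype.card V - a - 1).choose (r - a - 1) < degOf H A)
    (hMdisj : (M : Set (Finset V)).Pairwise Disjoint) {Q : Finset (Finset V)} (hQM : Q ⊆ M) :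
    ∃ N ⊆ H, (N : Set (Finset V)).Pairwise Disjoint ∧ N.card = Q.card ∧
      ∀ E ∈ N, ∀ B ∈ M \ Q, Disjoint E B := by
  induction Q using Finset.induction_on with
  | empty => exact ⟨∅, empty_subset H, by simp, rfl, by simp⟩
  | insert A Q hAQ ih =>
    rw [insert_subset_iff] at hQM
    obtain ⟨hAM, hQM⟩ := hQM
    obtain ⟨N, hNH, hNdisj, hNcard, hNM⟩ := ih hQM
    set R := M \ insert A Q
    set F := (N ∪ R).biUnion id
    have hFA : Disjoint F A := by
      refine (disjoint_biUnion_left _ _ _).2 fun B hB => (mem_union.1 hB).elim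
        (fun hBN => hNM B hBN A (mem_sdiff.2 ⟨hAM, hAQ⟩)) fun hBR => ?_
      obtain ⟨hBM, hBAQ⟩ := mem_sdiff.1 hBR
      exact hMdisj hBM hAM fun h => hBAQ (h ▸ mem_insert_self A Q)
    have hFcard : F.card ≤ r * k := by
      have hRcard : R.card + Q.card + 1 = M.card := by
        have := card_le_card (insert_subset hAM hQM)
        rw [card_sdiff_of_subset (insert_subset hAM hQM), card_insert_of_notMem hAQ] at *
        omega
      calc F.card ≤ (N ∪ R).card * r := card_biUnion_le_card_mul _ _ _ fun B hB =>
            (mem_union.1 hB).elim (fun hBN => (hunif B (hNH hBN)).le)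
              fun hBR => (hMa B (mem_sdiff.1 hBR).1).trans_le har.le
        _ ≤ k * r := by gcongr; exact (card_union_le N R).trans (by omega)
        _ = r * k := mul_comm k r
    obtain ⟨E, hEH, hAE, hEF⟩ := exists_edge_superset_disjoint hunif hFA
      ((hMdeg A hAM).trans_le' (by rw [hMa A hAM]; gcongr))
    have hEN : ∀ E' ∈ N, Disjoint E E' := fun E' hE' =>
      hEF.mono_right (subset_biUnion_of_mem id (mem_union_left R hE'))
    have hE : E.Nonempty := card_pos.1 (hunif E hEH ▸ (Nat.zero_le a).trans_lt har)
    refine ⟨insert E N, insert_subset hEH hNH, ?_, ?_, ?_⟩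
    · rw [coe_insert, Set.pairwise_insert_of_symm]
      exact ⟨hNdisj, fun E' hE' _ => hEN E' hE'⟩
    · rw [card_insert_of_notMem fun h => hE.ne_empty (disjoint_self.1 (hEN E h)),
        card_insert_of_notMem hAQ, hNcard]
    · intro E' hE' B hB
      rcases mem_insert.1 hE' with rfl | hE'N
      · exact hEF.mono_right (subset_biUnion_of_mem id (mem_union_right N hB))
      · exact hNM E' hE'N B (sdiff_subset_sdiff subset_rfl (subset_insert A Q) hB)

end

theorem matchingLE_highDegree_sets_general {n k r a : ℕ}
    (har : a < r)
    (H : Finset (Finset (Fin n))) (hunif : ∀ E ∈ H, E.card = r)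
    (hmatch : matchingLE H k) :
    matchingLE
      ((Finset.univ.powersetCard a).filter
        (fun A : Finset (Fin n) =>
          (∀ x ∈ A, (x : ℕ) < r * k + a - 1) ∧
          r * k * Nat.choose (n - a - 1) (r - a - 1) < degOf H A)) k := by
  intro M hM hMdisj
  by_contra! hMcard
  obtain ⟨M', hM'M, hM'card⟩ := exists_subset_card_eq (Nat.succ_le_of_lt hMcard)
  have hM'mem : ∀ A ∈ M', A.card = a ∧
      r * k * (Fintype.card (Fin n) - a - 1).choose (r - a - 1) < degOf H A := fun A hA => by
    obtain ⟨hA, -, hdeg⟩ := by simpa only [mem_filter, mem_powersetCard_univ] using hM (hM'M hA)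
    rw [Fintype.card_fin]
    exact ⟨hA, hdeg⟩
  obtain ⟨N, hNH, hNdisj, hNcard, -⟩ := exists_matching_extending_highDegree hunif har
    hM'card.le (fun A hA => (hM'mem A hA).1) (fun A hA => (hM'mem A hA).2)
    (hMdisj.mono (coe_subset.2 hM'M)) subset_rfl
  have := hmatch N hNH hNdisj
  omega

/-- Claim 2 in the proof of Theorem 1.3 (II): the `a`-graph of
high-degree `a`-sets inside `[rk+a-1]` has matching number at most `k`. -/
theorem matchingLE_highDegree_sets {n k r a : ℕ}
    (hn0 : 0 < n) (hk0 : 0 < k) (hr0 : 0 < r) (ha0 : 0 < a)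
    (har : a < r) (hn : r * (k + 1) ≤ n)
    (H : Finset (Finset (Fin n))) (hunif : ∀ E ∈ H, E.card = r)
    (hmatch : matchingLE H k) :
    matchingLE
      ((Finset.univ.powersetCard a).filter
        (fun A : Finset (Fin n) =>
          (∀ x ∈ A, (x : ℕ) < r * k + a - 1) ∧
          r * k * Nat.choose (n - a - 1) (r - a - 1) < degOf H A)) k :=
  matchingLE_highDegree_sets_general har H hunif hmatch
end

section
/- For all positive integers n, k, r, s, a with a ≤ r ≤ s ≤ n and ak+a−1 ≤ n, the number of s-cliques of F^{(r)}_{n,k,a} is K_s^r(F^{(r)}_{n,k,a}) = Σ_{i=s−r+a}^{s} C(ak+a−1, i)·C(n−ak−a+1, s−i); equivalently, an s-element subset S of [n] is an s-clique of F^{(r)}_{n,k,a} if and only if |S ∩ [ak+a−1]| ≥ s−r+a. -/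
open Finset

/-!
An `r`-subset `E` of `S` has at least `r - |S \ L|` points in `L`, and this bound is attained by
putting as much of `S \ L` into `E` as possible. Hence, for `a > 0`, the set `S` is a clique of
the hypergraph of `r`-sets meeting `L` in at least `a` points iff `|S ∩ L| ≥ |S| - r + a`.
Sorting the `s`-sets by the size `i` of their trace on `L` gives `C(|L|, i) * C(|Lᶜ|, s - i)`
sets for each `i`. For `F^{(r)}_{n,k,a}`, `L` is the initial segment `[a * k + a - 1]`.
-/

namespace Finset

variable {V : Type*} [DecidableEq V]

lemma union_inter_eq_left_and_union_sdiff_eq_right {A B L : Finset V} (hA : A ⊆ L)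
    (hB : Disjoint B L) : (A ∪ B) ∩ L = A ∧ (A ∪ B) \ L = B := by
  rw [union_inter_distrib_right, union_sdiff_distrib, inter_eq_left.2 hA,
    sdiff_eq_self_of_disjoint hB, disjoint_iff_inter_eq_empty.1 hB,
    sdiff_eq_empty_iff_subset.2 hA, union_empty, empty_union]
  exact ⟨rfl, rfl⟩

lemma card_filter_powersetCard_card_inter_eq [Fintype V] (L : Finset V) {s i : ℕ} (hi : i ≤ s) :
    #{S ∈ univ.powersetCard s | #(S ∩ L) = i} = (#L).choose i * (#Lᶜ).choose (s - i) := by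
  rw [← card_powersetCard, ← card_powersetCard, ← card_product]
  refine card_nbij' (fun S => (S ∩ L, S \ L)) (fun P => P.1 ∪ P.2) ?_ ?_ ?_ ?_
  · intro S hS
    simp only [coe_filter, mem_powersetCard_univ, Set.mem_ofPred_eq] at hS
    have := card_inter_add_card_sdiff S L
    simp only [coe_product, mem_coe, Set.mem_prod, mem_powersetCard]
    exact ⟨⟨inter_subset_right, hS.2⟩, fun x hx => by simp [(mem_sdiff.1 hx).2], by omega⟩
  · rintro ⟨A, B⟩ hP
    simp only [coe_product, Set.mem_prod, mem_coe, mem_powersetCard] at hP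
    obtain ⟨⟨hA, rfl⟩, hB, hBc⟩ := hP
    have hBL : Disjoint B L := subset_compl_iff_disjoint_right.1 hB
    simp only [coe_filter, mem_powersetCard_univ, Set.mem_ofPred_eq,
      (union_inter_eq_left_and_union_sdiff_eq_right hA hBL).1, and_true]
    rw [card_union_of_disjoint (disjoint_of_subset_left hA hBL.symm)]
    omega
  · intro S _
    exact sup_inf_sdiff S L
  · rintro ⟨A, B⟩ hP
    simp only [coe_product, Set.mem_prod, mem_coe, mem_powersetCard] at hP
    have := union_inter_eq_left_and_union_sdiff_eq_right hP.1.1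
      (subset_compl_iff_disjoint_right.1 hP.2.1)
    simp only [this]

lemma card_filter_powersetCard_le_card_inter [Fintype V] (L : Finset V) (s c : ℕ) :
    #{S ∈ univ.powersetCard s | c ≤ #(S ∩ L)}
      = ∑ i ∈ Icc c s, (#L).choose i * (#Lᶜ).choose (s - i) := by
  rw [card_eq_sum_card_fiberwise (f := fun S => #(S ∩ L)) (t := Icc c s)]
  · refine sum_congr rfl fun i hi => ?_
    obtain ⟨hci, his⟩ := mem_Icc.1 hi
    rw [filter_filter, ← card_filter_powersetCard_card_inter_eq L his]
    exact congrArg card <| filter_congr fun S _ => ⟨And.right, fun h => ⟨h ▸ hci, h⟩⟩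
  · intro S hS
    simp only [coe_filter, mem_powersetCard_univ, Set.mem_ofPred_eq] at hS
    exact mem_Icc.2 ⟨hS.2, hS.1 ▸ card_le_card inter_subset_left⟩

lemma exists_mem_powersetCard_card_inter_eq {S : Finset V} {r : ℕ} (hr : r ≤ #S) (L : Finset V) :
    ∃ E ∈ S.powersetCard r, #(E ∩ L) = r - #(S \ L) := by
  rcases le_total r #(S \ L) with h | h
  · obtain ⟨E, hE, rfl⟩ := exists_subset_card_eq h
    refine ⟨E, mem_powersetCard.2 ⟨hE.trans sdiff_subset, rfl⟩, ?_⟩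
    rw [Nat.sub_eq_zero_of_le (card_le_card hE), card_eq_zero,
      ← disjoint_iff_inter_eq_empty]
    exact disjoint_of_subset_left hE disjoint_sdiff_self_left
  · obtain ⟨E, hSE, hES, rfl⟩ := exists_subsuperset_card_eq sdiff_subset h hr
    refine ⟨E, mem_powersetCard.2 ⟨hES, rfl⟩, ?_⟩
    have hEL : E \ L = S \ L := le_antisymm (sdiff_le_sdiff_right hES) (by
      simpa using sdiff_le_sdiff_right (c := L) hSE)
    rw [← hEL, ← card_inter_add_card_sdiff E L, Nat.add_sub_cancel]

lemma sub_card_sdiff_le_card_inter {S E : Finset V} (hE : E ⊆ S) (L : Finset V) :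
    #E - #(S \ L) ≤ #(E ∩ L) := by
  have := card_inter_add_card_sdiff E L
  have := card_le_card (sdiff_subset_sdiff hE (subset_refl L))
  omega

lemma forall_mem_powersetCard_le_card_inter_iff {S : Finset V} {r a : ℕ} (ha : 0 < a)
    (hr : r ≤ #S) (L : Finset V) :
    (∀ E ∈ S.powersetCard r, a ≤ #(E ∩ L)) ↔ #S - r + a ≤ #(S ∩ L) := by
  have hS := card_inter_add_card_sdiff S L
  constructor
  · intro h
    obtain ⟨E, hE, hEL⟩ := exists_mem_powersetCard_card_inter_eq hr L
    have := h E hE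
    omega
  · intro h E hE
    obtain ⟨hES, rfl⟩ := mem_powersetCard.1 hE
    have := sub_card_sdiff_le_card_inter hES L
    omega

end Finset

theorem cliqueCount_Fnka_formula_general {n k r s a : ℕ}
    (ha0 : 0 < a) (hrs : r ≤ s) (hak : a * k + a - 1 ≤ n) :
    cliqueCount r s (Fnka n k r a)
        = ∑ i ∈ Finset.Icc (s - r + a) s,
            Nat.choose (a * k + a - 1) i * Nat.choose (n - (a * k + a - 1)) (s - i) ∧
      ∀ S : Finset (Fin n), S.card = s →
        (S.powersetCard r ⊆ Fnka n k r a ↔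
          s - r + a ≤ (S.filter (fun x : Fin n => (x : ℕ) < a * k + a - 1)).card) := by
  set m := a * k + a - 1
  set L : Finset (Fin n) := {x | (x : ℕ) < m}
  have hfilter (E : Finset (Fin n)) : E.filter (fun x : Fin n => (x : ℕ) < m) = E ∩ L := by
    rw [inter_filter, inter_univ]
  have hclique (S : Finset (Fin n)) (hS : #S = s) :
      S.powersetCard r ⊆ Fnka n k r a ↔ s - r + a ≤ #(S.filter fun x : Fin n => (x : ℕ) < m) := by
    rw [hfilter, ← hS, ← forall_mem_powersetCard_le_card_inter_iff ha0 (hS ▸ hrs) L]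
    refine forall₂_congr fun E hE => ?_
    rw [← hfilter]
    simp [Fnka, (mem_powersetCard.1 hE).2, m]
  have hL : #L = m := by simp [L, Fin.card_filter_val_lt, hak]
  have hLc : #Lᶜ = n - m := by rw [card_compl, Fintype.card_fin, hL]
  refine ⟨?_, hclique⟩
  rw [cliqueCount, ← hLc, ← hL, ← card_filter_powersetCard_le_card_inter]
  congr 1
  exact filter_congr fun S hS => (hclique S (mem_powersetCard_univ.1 hS)).trans (by rw [hfilter])

/-- the clique count of `F^{(r)}_{n,k,a}`, together with the
characterization of its `s`-cliques. -/
theorem cliqueCount_Fnka_formula {n k r s a : ℕ}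
    (hn0 : 0 < n) (hk0 : 0 < k) (hr0 : 0 < r) (hs0 : 0 < s) (ha0 : 0 < a)
    (har : a ≤ r) (hrs : r ≤ s) (hsn : s ≤ n) (hak : a * k + a - 1 ≤ n) :
    cliqueCount r s (Fnka n k r a)
        = ∑ i ∈ Finset.Icc (s - r + a) s,
            Nat.choose (a * k + a - 1) i * Nat.choose (n - (a * k + a - 1)) (s - i) ∧
      ∀ S : Finset (Fin n), S.card = s →
        (S.powersetCard r ⊆ Fnka n k r a ↔
          s - r + a ≤ (S.filter (fun x : Fin n => (x : ℕ) < a * k + a - 1)).card) :=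
  cliqueCount_Fnka_formula_general ha0 hrs hak
end
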